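/- arXiv:2507.11706 — 5 statements merged into one kernel-verified Lean document; each statement's English description precedes it below -/
import Mathlib

section
/- Fix a state s and a policy π_t over arm pairs, i.e., a distribution π_t(·|s) on [K]×[K]. Suppose the arm pair (a^L_{t,s}, a^R_{t,s}) is drawn from π_t(·|s) in such a way that a^L_{t,s} and a^R_{t,s} are independent, and the observed preference satisfies o_t(s, a^L, a^R) ~ Ber(P_t(s, a^L, a^R)). Then for every arm i ∈ [K], the estimator b̂_t(s,i) is an unbiased estimator of the shifted Borda score: E_t[b̂_t(s,i)] = b_t(s,i). -/
open Finset

/-- **Unbiasedness of the Borda-score estimator.**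
Fix a state and a policy `π` over arm pairs `[K] × [K]` (a probability distribution on
`Fin K × Fin K` whose two coordinates are independent, i.e. the joint mass is the product of
the two marginals, both of which are positive).  The arm pair `(aL, aR)` is drawn from `π` and
the observed preference `o` is Bernoulli with mean `Pt aL aR`, where `Pt` is the preference
function (`Pt i j = 1 − Pt j i`, values in `[0,1]`).  Then for every arm `i`, the estimator
`b̂(i) = 1{aL = i}/(K Σ_{j'} π(i,j')) · (o − 1)/(Σ_{i'} π(i', aR))`
is an unbiased estimator of the shifted Borda score `b(i) = (1/K) Σ_j (Pt i j − 1)`: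
the expectation below is exactly `b(i)`. -/
theorem borda_estimator_unbiased
    (K : ℕ) (hK : 0 < K)
    (Pt : Fin K → Fin K → ℝ)
    (hPt01 : ∀ i j, Pt i j ∈ Set.Icc (0 : ℝ) 1)
    (hPtsym : ∀ i j, Pt i j = 1 - Pt j i)
    (π : Fin K × Fin K → ℝ)
    (hπ0 : ∀ p, 0 ≤ π p) (hπ1 : ∑ p, π p = 1)
    (hindep : ∀ i j, π (i, j) = (∑ j', π (i, j')) * (∑ i', π (i', j)))
    (hposL : ∀ i, 0 < ∑ j', π (i, j'))
    (hposR : ∀ j, 0 < ∑ i', π (i', j))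
    (i : Fin K) :
    (∑ p : Fin K × Fin K, ∑ o : Bool,
        (π p * (if o then Pt p.1 p.2 else 1 - Pt p.1 p.2)) *
          (((if p.1 = i then (1 : ℝ) else 0) / ((K : ℝ) * ∑ j', π (i, j'))) *
            (((if o then (1 : ℝ) else 0) - 1) / (∑ i', π (i', p.2))))) =
      (1 / (K : ℝ)) * ∑ j, (Pt i j - 1) := by
  have hKne : (K : ℝ) ≠ 0 := Nat.cast_ne_zero.mpr hK.ne'
  have hL : (∑ j', π (i, j')) ≠ 0 := (hposL i).ne'
  have hmain : ∀ p : Fin K × Fin K,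
      (∑ o : Bool,
        (π p * (if o then Pt p.1 p.2 else 1 - Pt p.1 p.2)) *
          (((if p.1 = i then (1 : ℝ) else 0) / ((K : ℝ) * ∑ j', π (i, j'))) *
            (((if o then (1 : ℝ) else 0) - 1) / (∑ i', π (i', p.2))))) =
      if p.1 = i then (Pt i p.2 - 1) / K else 0 := by
    intro p
    rw [Fintype.sum_bool]
    simp only [if_true, if_false]
    by_cases h : p.1 = i
    · subst h
      rw [hindep p.1 p.2]
      have hR : (∑ i', π (i', p.2)) ≠ 0 := (hposR p.2).ne'
      simp only [if_pos rfl, eq_self_iff_true, Bool.false_eq_true, ↓reduceIte]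
      field_simp
      ring
    · simp [h]
  rw [Finset.sum_congr rfl (fun p _ => hmain p), Fintype.sum_prod_type]
  rw [Finset.sum_comm]
  have : ∀ b : Fin K, (∑ a : Fin K, if a = i then (Pt i b - 1) / K else 0)
      = (Pt i b - 1) / K := by
    intro b; rw [Finset.sum_ite_eq' univ i (fun _ => (Pt i b - 1) / K)]
    simp
  rw [Finset.sum_congr rfl (fun b _ => this b), Finset.mul_sum]
  refine Finset.sum_congr rfl fun b _ => ?_
  ring
end

section
/- Under Algorithm 1 (the global-optimization algorithm for preference-based MDPs with Borda scores under known transitions), for every state s ∈ S and arm i ∈ [K], the second moment of the exploration Borda estimator satisfies E_t[b̃_t(s,i)²] ≤ S·K/(γ·r_s(s)), where E_t is the expectation conditioned on all observations before episode t. -/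
open Finset

/-- **Second moment of the exploration Borda estimator of Algorithm 1 (Lemma 1).**
We model one episode of Algorithm 1 (global optimization for preference-based MDPs with Borda
scores, known transitions) on a finite probability space `(Ω, μ)`:
`ξ` is the exploration indicator (`ξ = 1` with probability `γ`), `s̃` is the state sampled
uniformly from `S` in exploration episodes, `Ivis` indicates that the sampled state was reached
(which, under the policy maximizing the reach probability, happens with probability
`r_s(s) =: rs`), and at the sampled state both arms `aL, aR` are drawn independently and
uniformly from `[K]` (so the policy `πt` at that state is uniform over arm pairs) and the
Bernoulli preference `o` is observed.  The estimator is
`b̃(s,i) = (S/(γ q^{π_t}(s))) · 1{ξ = 1, s̃ = s} · 1{Ivis} · b̂(s,i)` with `q^{π_t}(s) = rs`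
on that event.  Then `E[b̃(s,i)²] ≤ S·K/(γ·r_s(s))`. -/
theorem btilde_second_moment
    {S : Type*} [Fintype S] [DecidableEq S]
    (K : ℕ) (hK : 0 < K)
    {Ω : Type*} [Fintype Ω]
    (μ : Ω → ℝ) (hμ0 : ∀ ω, 0 ≤ μ ω) (hμ1 : ∑ ω, μ ω = 1)
    (γ : ℝ) (hγ0 : 0 < γ) (hγ1 : γ ≤ 1 / 2)
    (ξ : Ω → Bool) (stil : Ω → S) (Ivis : Ω → Bool)
    (aL aR : Ω → Fin K) (o : Ω → Bool)
    (πt : Fin K × Fin K → ℝ)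
    (hπt : ∀ p, πt p = 1 / ((K : ℝ) ^ 2))
    (s : S) (rs : ℝ) (hrs0 : 0 < rs) (hrs1 : rs ≤ 1)
    (hsel : ∑ ω ∈ Finset.univ.filter (fun ω => ξ ω = true ∧ stil ω = s), μ ω =
      γ / (Fintype.card S : ℝ))
    (hreach : ∑ ω ∈ Finset.univ.filter
        (fun ω => ξ ω = true ∧ stil ω = s ∧ Ivis ω = true), μ ω =
      γ / (Fintype.card S : ℝ) * rs)
    (harm : ∀ i : Fin K, ∑ ω ∈ Finset.univ.filter
        (fun ω => ξ ω = true ∧ stil ω = s ∧ Ivis ω = true ∧ aL ω = i), μ ω =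
      γ / (Fintype.card S : ℝ) * rs * (1 / (K : ℝ)))
    (i : Fin K) :
    ∑ ω, μ ω *
        (((Fintype.card S : ℝ) / (γ * rs)) *
          (if ξ ω = true ∧ stil ω = s then (1 : ℝ) else 0) *
          (if Ivis ω = true then (1 : ℝ) else 0) *
          (((if aL ω = i then (1 : ℝ) else 0) / ((K : ℝ) * ∑ j' : Fin K, πt (i, j'))) *
            (((if o ω then (1 : ℝ) else 0) - 1) / (∑ i' : Fin K, πt (i', aR ω))))) ^ 2 ≤
      (Fintype.card S : ℝ) * (K : ℝ) / (γ * rs) := by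
  classical
  set Sc := (Fintype.card S : ℝ) with hSc
  have hScpos : 0 < Sc := by
    have h : 0 < Fintype.card S := Fintype.card_pos_iff.mpr ⟨s⟩
    rw [hSc]
    exact_mod_cast h
  have hKpos : (0:ℝ) < K := by exact_mod_cast hK
  have hKne : (K:ℝ) ≠ 0 := hKpos.ne'
  have hγrs : 0 < γ * rs := mul_pos hγ0 hrs0
  set C := Sc / (γ * rs) with hC
  have hC0 : 0 ≤ C := div_nonneg hScpos.le hγrs.le
  have hsumj : (∑ j' : Fin K, πt (i, j')) = 1 / K := by
    simp only [hπt, Finset.sum_const, Finset.card_univ, Fintype.card_fin, nsmul_eq_mul]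
    field_simp
  have hsumi : ∀ a : Fin K, (∑ i' : Fin K, πt (i', a)) = 1 / K := by
    intro a
    simp only [hπt, Finset.sum_const, Finset.card_univ, Fintype.card_fin, nsmul_eq_mul]
    field_simp
  have key : ∀ ω, μ ω *
        (C *
          (if ξ ω = true ∧ stil ω = s then (1 : ℝ) else 0) *
          (if Ivis ω = true then (1 : ℝ) else 0) *
          (((if aL ω = i then (1 : ℝ) else 0) / ((K : ℝ) * ∑ j' : Fin K, πt (i, j'))) *
            (((if o ω then (1 : ℝ) else 0) - 1) / (∑ i' : Fin K, πt (i', aR ω))))) ^ 2 ≤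
      μ ω * (C^2 * (K:ℝ)^2 *
        (if ξ ω = true ∧ stil ω = s ∧ Ivis ω = true ∧ aL ω = i then (1:ℝ) else 0)) := by
    intro ω
    apply mul_le_mul_of_nonneg_left _ (hμ0 ω)
    rw [hsumj, hsumi (aR ω)]
    by_cases h1 : ξ ω = true ∧ stil ω = s
    · by_cases h2 : Ivis ω = true
      · by_cases h3 : aL ω = i
        · by_cases h4 : o ω
          · simp [h1, h2, h3, h4]
            positivity
          · have ho : (if o ω = true then (1:ℝ) else 0) = 0 := by simp [h4]
            have hk : (K:ℝ) * (1/K) = 1 := by field_simp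
            simp only [h1, h2, h3, ho, and_self, if_true, hk]
            have e : C * 1 * 1 * ((1:ℝ) / 1 * ((0 - 1) / (1 / (K:ℝ)))) = -(C * K) := by
              field_simp
              ring
            rw [e]
            exact le_of_eq (by ring)
        · simp [h1, h2, h3]
      · simp [h2]
    · simp [h1]
      split <;> positivity
  calc ∑ ω, μ ω *
        (C *
          (if ξ ω = true ∧ stil ω = s then (1 : ℝ) else 0) *
          (if Ivis ω = true then (1 : ℝ) else 0) *
          (((if aL ω = i then (1 : ℝ) else 0) / ((K : ℝ) * ∑ j' : Fin K, πt (i, j'))) *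
            (((if o ω then (1 : ℝ) else 0) - 1) / (∑ i' : Fin K, πt (i', aR ω))))) ^ 2
      ≤ ∑ ω, μ ω * (C^2 * (K:ℝ)^2 *
        (if ξ ω = true ∧ stil ω = s ∧ Ivis ω = true ∧ aL ω = i then (1:ℝ) else 0)) :=
        Finset.sum_le_sum (fun ω _ => key ω)
    _ = C^2 * (K:ℝ)^2 * ∑ ω ∈ Finset.univ.filter
        (fun ω => ξ ω = true ∧ stil ω = s ∧ Ivis ω = true ∧ aL ω = i), μ ω := by
        rw [Finset.sum_filter, Finset.mul_sum]
        refine Finset.sum_congr rfl fun ω _ => ?_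
        by_cases h : ξ ω = true ∧ stil ω = s ∧ Ivis ω = true ∧ aL ω = i <;>
          simp [h] <;> ring
    _ = C^2 * (K:ℝ)^2 * (γ / Sc * rs * (1 / K)) := by rw [harm i]
    _ = Sc * (K:ℝ) / (γ * rs) := by
        rw [hC]
        field_simp
end

section
/- In the policy-optimization meta-algorithm with known transitions, for every state-action pair (s,a), the Q-function estimator satisfies E_t[Q̂_t(s,a)] = (q_t(s,a)/(q_t(s,a)+δ))·Q^{π_t}(s,a; ℓ_t), where the expectation is over the per-state exploration indicators ξ_t(s) ~ Ber(γ) and over the trajectory started at (s,a) and generated by policy π_t and the true transition kernel P. -/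
open Finset

section Core

variable {S : Type*} [Fintype S] [DecidableEq S]
variable {A : Type*} [Fintype A] [DecidableEq A]

/-- Probability that the Markov policy `π`, under transition kernel `P`, generates the
length-`L` trajectory `τ` starting from state `s`. -/
noncomputable def trajProb (P : S → A → S → ℝ) (π : S → A → ℝ) (s : S) (L : ℕ)
    (τ : Fin L → S × A) : ℝ :=
  (if hL : 0 < L then (if (τ ⟨0, hL⟩).1 = s then (1 : ℝ) else 0) else 1) *
    ∏ h : Fin L,
      (π (τ h).1 (τ h).2 *
        if hh : (h : ℕ) + 1 < L then P (τ h).1 (τ h).2 (τ ⟨(h : ℕ) + 1, hh⟩).1 else 1)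

/-- Expected cumulative loss of policy `π` over `L` steps starting from state `s`. -/
noncomputable def valueFrom (P : S → A → S → ℝ) (π : S → A → ℝ) (s : S) (L : ℕ)
    (ℓ : S → A → ℝ) : ℝ :=
  ∑ τ : Fin L → S × A, trajProb P π s L τ * ∑ h : Fin L, ℓ (τ h).1 (τ h).2

/-- Occupancy measure `q^π(s,a)`: the probability that the trajectory generated by `π` from
`s0` visits the state-action pair `(s,a)`. -/
noncomputable def occ (P : S → A → S → ℝ) (π : S → A → ℝ) (s0 : S) (H : ℕ)
    (s : S) (a : A) : ℝ :=
  ∑ τ : Fin H → S × A, trajProb P π s0 H τ * (if ∃ h, τ h = (s, a) then 1 else 0)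

noncomputable def occS (P : S → A → S → ℝ) (π : S → A → ℝ) (s0 : S) (H : ℕ) (s : S) : ℝ :=
  ∑ a, occ P π s0 H s a

/-- The Q-function `Q^π(s,a; ℓ)`. -/
noncomputable def Qfun (P : S → A → S → ℝ) (π : S → A → ℝ) (layer : S → ℕ) (H : ℕ)
    (ℓ : S → A → ℝ) (s : S) (a : A) : ℝ :=
  ℓ s a + ∑ s' : S, P s a s' * valueFrom P π s' (H - (layer s + 1)) ℓ

def IsPolicy (π : S → A → ℝ) : Prop :=
  (∀ s a, 0 ≤ π s a) ∧ ∀ s, ∑ a, π s a = 1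

def IsLayeredKernel (P : S → A → S → ℝ) (layer : S → ℕ) (H : ℕ) : Prop :=
  (∀ s a s', 0 ≤ P s a s') ∧
    (∀ s a, layer s + 1 < H → ∑ s', P s a s' = 1) ∧
    ∀ s a s', P s a s' ≠ 0 → layer s' = layer s + 1

/-- The ε-greedy mixture policy `π° (·|s) = (1−γ) π̃(·|s) + γ/A`. -/
noncomputable def mixPol (πtil : S → A → ℝ) (γ : ℝ) : S → A → ℝ :=
  fun s a => (1 - γ) * πtil s a + γ / (Fintype.card A : ℝ)

/-- The loss estimator `ℓ̂(s,a) = −(1{ξ(s)=1}/γ)·B̂(s,a)`. -/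
noncomputable def lhat {Ω : Type*} (γ : ℝ) (ξ : Ω → S → Bool) (Bhat : Ω → S → A → ℝ)
    (ω : Ω) (s : S) (a : A) : ℝ :=
  -((if ξ ω s then (1 : ℝ) else 0) / γ) * Bhat ω s a

/-- The importance-weighted tail sum
`L̂_{h(s)+1} = Σ_{k=h(s)+1}^{H−1} (π°(a_k|s_k)/π₀(a_k|s_k)) ℓ̂(s_k,a_k)`. -/
noncomputable def Lhat {Ω : Type*} (H : ℕ) (layer : S → ℕ) (πtil : S → A → ℝ) (γ : ℝ)
    (ξ : Ω → S → Bool) (traj : Ω → Fin H → S × A) (Bhat : Ω → S → A → ℝ)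
    (ω : Ω) (s : S) : ℝ :=
  ∑ k ∈ Finset.univ.filter (fun k : Fin H => layer s < (k : ℕ)),
    (mixPol πtil γ (traj ω k).1 (traj ω k).2 / ((Fintype.card A : ℝ))⁻¹) *
      lhat γ ξ Bhat ω (traj ω k).1 (traj ω k).2

/-- The Q-function estimator of the policy-optimization meta-algorithm (known transitions):
`Q̂(s,a) = (q(s,a)/(q(s,a)+δ)) · (𝕀(s,a)/(q(s)/A)) · ℓ̂(s,a) + (𝕀(s,a)/(q(s,a)+δ)) · L̂_{h(s)+1}`
where `q = q^{π°}`. -/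
noncomputable def QhatKnown {Ω : Type*} (P : S → A → S → ℝ) (s0 : S) (H : ℕ)
    (layer : S → ℕ) (πtil : S → A → ℝ) (γ δ : ℝ)
    (ξ : Ω → S → Bool) (traj : Ω → Fin H → S × A) (Bhat : Ω → S → A → ℝ)
    (ω : Ω) (s : S) (a : A) : ℝ :=
  (occ P (mixPol πtil γ) s0 H s a / (occ P (mixPol πtil γ) s0 H s a + δ)) *
      ((if ∃ h, traj ω h = (s, a) then (1 : ℝ) else 0) /
        (occS P (mixPol πtil γ) s0 H s / (Fintype.card A : ℝ))) *
      lhat γ ξ Bhat ω s a +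
    ((if ∃ h, traj ω h = (s, a) then (1 : ℝ) else 0) /
        (occ P (mixPol πtil γ) s0 H s a + δ)) *
      Lhat H layer πtil γ ξ traj Bhat ω s

set_option linter.unusedSectionVars false

variable (P : S → A → S → ℝ) (π : S → A → ℝ)

lemma trajProb_zero (s : S) (σ : Fin 0 → S × A) : trajProb P π s 0 σ = 1 := by
  simp [trajProb]

lemma trajProb_start {L : ℕ} (hL : 0 < L) (x : S) (t : Fin L → S × A) :
    trajProb P π x L t
      = (if (t ⟨0, hL⟩).1 = x then 1 else 0) * trajProb P π (t ⟨0, hL⟩).1 L t := by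
  unfold trajProb
  rw [dif_pos hL, dif_pos hL, if_pos rfl]
  by_cases h : (t ⟨0, hL⟩).1 = x <;> simp [h]

lemma trajProb_succ {L : ℕ} (s : S) (x : S × A) (t : Fin L → S × A) :
    trajProb P π s (L+1) (Fin.cons x t) =
      (if x.1 = s then 1 else 0) * π x.1 x.2 *
        (if hL : 0 < L then P x.1 x.2 (t ⟨0, hL⟩).1 * trajProb P π (t ⟨0, hL⟩).1 L t
         else 1) := by
  unfold trajProb
  rw [dif_pos (Nat.succ_pos L), Fin.prod_univ_succ]
  rcases Nat.eq_zero_or_pos L with h0 | h0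
  · subst h0
    simp [Fin.cons_zero]
  · rw [dif_pos h0, dif_pos h0, if_pos rfl]
    simp only [Fin.val_zero, Fin.cons_zero]
    have e1 : ∀ (h : (0:ℕ) + 1 < L + 1), (Fin.cons x t : Fin (L+1) → S × A) ⟨0 + 1, h⟩ = t ⟨0, h0⟩ := by
      intro h
      have : (⟨0+1, h⟩ : Fin (L+1)) = Fin.succ ⟨0, h0⟩ := rfl
      rw [this, Fin.cons_succ]
    rw [dif_pos (by omega : (0:ℕ)+1 < L+1), e1]
    have eprod : ∀ i : Fin L,
        (π ((Fin.cons x t : Fin (L+1) → S × A) i.succ).1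
            ((Fin.cons x t : Fin (L+1) → S × A) i.succ).2 *
          if hh : (i.succ : ℕ) + 1 < L + 1 then
            P ((Fin.cons x t : Fin (L+1) → S × A) i.succ).1
              ((Fin.cons x t : Fin (L+1) → S × A) i.succ).2
              ((Fin.cons x t : Fin (L+1) → S × A) ⟨(i.succ : ℕ) + 1, hh⟩).1 else 1)
        = (π (t i).1 (t i).2 *
            if hh : (i : ℕ) + 1 < L then P (t i).1 (t i).2 (t ⟨(i : ℕ) + 1, hh⟩).1 else 1) := by
      intro i
      rw [Fin.cons_succ]
      congr 1
      by_cases hh : (i : ℕ) + 1 < L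
      · rw [dif_pos (by simpa using Nat.succ_lt_succ hh), dif_pos hh]
        have e2 : (⟨(i.succ : ℕ) + 1, by simpa using Nat.succ_lt_succ hh⟩ : Fin (L+1))
            = Fin.succ ⟨(i:ℕ) + 1, hh⟩ := rfl
        rw [e2, Fin.cons_succ]
      · rw [dif_neg (by simpa using fun h => hh (Nat.lt_of_succ_lt_succ h)), dif_neg hh]
    rw [Finset.prod_congr rfl (fun i _ => eprod i)]
    simp only [Fin.mk_zero, Fin.cons_zero]
    ring


lemma sum_cons_aux {β : Type*} [AddCommMonoid β] {L : ℕ} (f : (Fin (L+1) → S × A) → β) :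
    ∑ σ : Fin (L+1) → S × A, f σ = ∑ x : S × A, ∑ t : Fin L → S × A, f (Fin.cons x t) := by
  rw [← (Fin.consEquiv (fun _ : Fin (L+1) => S × A)).sum_comp f, Fintype.sum_prod_type]
  rfl

lemma trajProb_eq_ite {L : ℕ} (hL : 0 < L) (x : S) (t : Fin L → S × A) :
    trajProb P π x L t
      = if (t ⟨0, hL⟩).1 = x then trajProb P π (t ⟨0, hL⟩).1 L t else 0 := by
  rw [trajProb_start P π hL]
  by_cases h : (t ⟨0, hL⟩).1 = x <;> simp [h]

lemma sum_sel {L : ℕ} (hL : 0 < L) (t : Fin L → S × A) (f : S → ℝ) :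
    ∑ s' : S, f s' * trajProb P π s' L t
      = f (t ⟨0, hL⟩).1 * trajProb P π (t ⟨0, hL⟩).1 L t := by
  have : ∀ s' : S, f s' * trajProb P π s' L t
      = if (t ⟨0, hL⟩).1 = s' then f (t ⟨0, hL⟩).1 * trajProb P π (t ⟨0, hL⟩).1 L t else 0 := by
    intro s'
    rw [trajProb_eq_ite P π hL]
    by_cases h : (t ⟨0, hL⟩).1 = s' <;> simp [h]
  rw [Finset.sum_congr rfl (fun s' _ => this s'), Finset.sum_ite_eq]
  simp

lemma sum_trajProb_eq_one {H : ℕ} {layer : S → ℕ} (hP : IsLayeredKernel P layer H)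
    (hπ : IsPolicy π) :
    ∀ (L : ℕ) (s' : S), layer s' + L ≤ H →
      ∑ σ : Fin L → S × A, trajProb P π s' L σ = 1 := by
  intro L
  induction L with
  | zero => intro s' _; simp [trajProb_zero]
  | succ L ih =>
    intro s' hL
    rw [sum_cons_aux]
    have key : ∀ x : S × A, ∑ t : Fin L → S × A, trajProb P π s' (L+1) (Fin.cons x t)
        = (if x.1 = s' then 1 else 0) * π x.1 x.2 := by
      intro x
      by_cases hx : x.1 = s'
      · rcases Nat.eq_zero_or_pos L with h0 | h0
        · subst h0
          have e0 : ∀ t : Fin 0 → S × A, trajProb P π s' (0+1) (Fin.cons x t)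
              = (if x.1 = s' then 1 else 0) * π x.1 x.2 := by
            intro t; rw [trajProb_succ, dif_neg (by omega)]; ring
          rw [Finset.sum_congr rfl (fun t _ => e0 t)]
          simp
        · have e1 : ∀ t : Fin L → S × A, trajProb P π s' (L+1) (Fin.cons x t)
              = (if x.1 = s' then 1 else 0) * π x.1 x.2 *
                ∑ s'' : S, P x.1 x.2 s'' * trajProb P π s'' L t := by
            intro t
            rw [trajProb_succ, dif_pos h0, sum_sel P π h0]
          rw [Finset.sum_congr rfl (fun t _ => e1 t), ← Finset.mul_sum, Finset.sum_comm]
          have e2 : ∀ s'' : S, ∑ t : Fin L → S × A, P x.1 x.2 s'' * trajProb P π s'' L t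
              = P x.1 x.2 s'' := by
            intro s''
            rw [← Finset.mul_sum]
            by_cases hz : P x.1 x.2 s'' = 0
            · simp [hz]
            · have hlay := hP.2.2 x.1 x.2 s'' hz
              rw [ih s'' (by rw [hlay, hx]; omega)]
              ring
          rw [Finset.sum_congr rfl (fun s'' _ => e2 s'')]
          rw [hP.2.1 x.1 x.2 (by rw [hx]; omega)]
          ring
      · have e3 : ∀ t : Fin L → S × A, trajProb P π s' (L+1) (Fin.cons x t) = 0 := by
          intro t; rw [trajProb_succ, if_neg hx]; ring
        rw [Finset.sum_congr rfl (fun t _ => e3 t)]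
        simp [hx]
    rw [Finset.sum_congr rfl (fun x _ => key x), Fintype.sum_prod_type]
    have e4 : ∀ u : S, ∑ b : A, (if u = s' then (1:ℝ) else 0) * π u b
        = if u = s' then 1 else 0 := by
      intro u
      by_cases hu : u = s'
      · subst hu; simp [hπ.2 u]
      · simp [hu]
    rw [Finset.sum_congr rfl (fun u _ => e4 u), Finset.sum_ite_eq']
    simp

noncomputable def lsum (ℓ : S → A → ℝ) (L : ℕ) (σ : Fin L → S × A) : ℝ :=
  ∑ h, ℓ (σ h).1 (σ h).2

lemma lsum_zero (ℓ : S → A → ℝ) (σ : Fin 0 → S × A) : lsum ℓ 0 σ = 0 := by simp [lsum]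

lemma lsum_cons (ℓ : S → A → ℝ) {L : ℕ} (x : S × A) (t : Fin L → S × A) :
    lsum ℓ (L+1) (Fin.cons x t) = ℓ x.1 x.2 + lsum ℓ L t := by
  unfold lsum
  rw [Fin.sum_univ_succ]
  simp [Fin.cons_succ]

lemma valueFrom_eq (ℓ : S → A → ℝ) (L : ℕ) (s' : S) :
    valueFrom P π s' L ℓ = ∑ σ : Fin L → S × A, trajProb P π s' L σ * lsum ℓ L σ := rfl

lemma valueFrom_zero (ℓ : S → A → ℝ) (s' : S) : valueFrom P π s' 0 ℓ = 0 := by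
  simp [valueFrom]

lemma valueFrom_succ {H : ℕ} {layer : S → ℕ} (hP : IsLayeredKernel P layer H)
    (hπ : IsPolicy π) (ℓ : S → A → ℝ) (L : ℕ) (s' : S) (hL : layer s' + (L+1) ≤ H) :
    valueFrom P π s' (L+1) ℓ
      = ∑ b : A, π s' b * (ℓ s' b + ∑ s'' : S, P s' b s'' * valueFrom P π s'' L ℓ) := by
  rw [valueFrom_eq]
  rw [sum_cons_aux]
  have key : ∀ x : S × A,
      ∑ t : Fin L → S × A, trajProb P π s' (L+1) (Fin.cons x t) * lsum ℓ (L+1) (Fin.cons x t)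
      = (if x.1 = s' then 1 else 0) * π x.1 x.2 *
          (ℓ x.1 x.2 + ∑ s'' : S, P x.1 x.2 s'' * valueFrom P π s'' L ℓ) := by
    intro x
    by_cases hx : x.1 = s'
    · rcases Nat.eq_zero_or_pos L with h0 | h0
      · subst h0
        have e0 : ∀ t : Fin 0 → S × A,
            trajProb P π s' (0+1) (Fin.cons x t) * lsum ℓ (0+1) (Fin.cons x t)
            = (if x.1 = s' then 1 else 0) * π x.1 x.2 * ℓ x.1 x.2 := by
          intro t
          rw [trajProb_succ, dif_neg (by omega), lsum_cons, lsum_zero]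
          ring
        rw [Finset.sum_congr rfl (fun t _ => e0 t)]
        simp [valueFrom_zero]
      · have e1 : ∀ t : Fin L → S × A,
            trajProb P π s' (L+1) (Fin.cons x t) * lsum ℓ (L+1) (Fin.cons x t)
            = (if x.1 = s' then 1 else 0) * π x.1 x.2 *
                ∑ s'' : S, (P x.1 x.2 s'' * (ℓ x.1 x.2 + lsum ℓ L t)) *
                  trajProb P π s'' L t := by
          intro t
          rw [trajProb_succ, dif_pos h0, lsum_cons,
            sum_sel P π h0 t (fun s'' => P x.1 x.2 s'' * (ℓ x.1 x.2 + lsum ℓ L t))]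
          ring
        rw [Finset.sum_congr rfl (fun t _ => e1 t), ← Finset.mul_sum, Finset.sum_comm]
        have e2 : ∀ s'' : S,
            ∑ t : Fin L → S × A, (P x.1 x.2 s'' * (ℓ x.1 x.2 + lsum ℓ L t)) *
              trajProb P π s'' L t
            = P x.1 x.2 s'' * (ℓ x.1 x.2 + valueFrom P π s'' L ℓ) := by
          intro s''
          by_cases hz : P x.1 x.2 s'' = 0
          · simp [hz]
          · have hlay := hP.2.2 x.1 x.2 s'' hz
            have hW := sum_trajProb_eq_one P π hP hπ L s'' (by rw [hlay, hx]; omega)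
            have ee : ∀ t : Fin L → S × A,
                (P x.1 x.2 s'' * (ℓ x.1 x.2 + lsum ℓ L t)) * trajProb P π s'' L t
                = P x.1 x.2 s'' * ℓ x.1 x.2 * trajProb P π s'' L t +
                  P x.1 x.2 s'' * (trajProb P π s'' L t * lsum ℓ L t) := by
              intro t; ring
            rw [Finset.sum_congr rfl (fun t _ => ee t), Finset.sum_add_distrib,
              ← Finset.mul_sum, ← Finset.mul_sum, hW, valueFrom_eq]
            ring
        rw [Finset.sum_congr rfl (fun s'' _ => e2 s'')]
        have e3 : ∑ s'' : S, P x.1 x.2 s'' * (ℓ x.1 x.2 + valueFrom P π s'' L ℓ)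
            = ℓ x.1 x.2 + ∑ s'' : S, P x.1 x.2 s'' * valueFrom P π s'' L ℓ := by
          have hsum := hP.2.1 x.1 x.2 (by rw [hx]; omega)
          calc ∑ s'' : S, P x.1 x.2 s'' * (ℓ x.1 x.2 + valueFrom P π s'' L ℓ)
              = (∑ s'' : S, P x.1 x.2 s'') * ℓ x.1 x.2 +
                  ∑ s'' : S, P x.1 x.2 s'' * valueFrom P π s'' L ℓ := by
                rw [Finset.sum_mul, ← Finset.sum_add_distrib]
                exact Finset.sum_congr rfl (fun _ _ => by ring)
            _ = _ := by rw [hsum]; ring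
        rw [e3]
    · have e5 : ∀ t : Fin L → S × A,
          trajProb P π s' (L+1) (Fin.cons x t) * lsum ℓ (L+1) (Fin.cons x t) = 0 := by
        intro t; rw [trajProb_succ, if_neg hx]; ring
      rw [Finset.sum_congr rfl (fun t _ => e5 t)]
      simp [hx]
  rw [Finset.sum_congr rfl (fun x _ => key x), Fintype.sum_prod_type]
  have e4 : ∀ u : S, ∑ b : A, (if u = s' then (1:ℝ) else 0) * π u b *
        (ℓ u b + ∑ s'' : S, P u b s'' * valueFrom P π s'' L ℓ)
      = if u = s' then ∑ b : A, π s' b *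
          (ℓ s' b + ∑ s'' : S, P s' b s'' * valueFrom P π s'' L ℓ) else 0 := by
    intro u
    by_cases hu : u = s'
    · subst hu; simp
    · simp [hu]
  rw [Finset.sum_congr rfl (fun u _ => e4 u), Finset.sum_ite_eq']
  simp

lemma cons_mk_zero {L : ℕ} (x : S × A) (t : Fin L → S × A) (h : 0 < L+1) :
    (Fin.cons x t : Fin (L+1) → S × A) ⟨0, h⟩ = x := by
  rw [Fin.mk_zero, Fin.cons_zero]

lemma cons_mk_succ {L : ℕ} (x : S × A) (t : Fin L → S × A) (k : ℕ) (h : k+1 < L+1) :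
    (Fin.cons x t : Fin (L+1) → S × A) ⟨k+1, h⟩ = t ⟨k, by omega⟩ := by
  have e : (⟨k+1, h⟩ : Fin (L+1)) = Fin.succ ⟨k, by omega⟩ := rfl
  rw [e, Fin.cons_succ]

noncomputable def ltail (ℓ : S → A → ℝ) (L : ℕ) (d : ℕ) (σ : Fin L → S × A) : ℝ :=
  ∑ k ∈ Finset.univ.filter (fun k : Fin L => d < (k : ℕ)), ℓ (σ k).1 (σ k).2

lemma ltail_cons_zero (ℓ : S → A → ℝ) {L : ℕ} (x : S × A) (t : Fin L → S × A) :
    ltail ℓ (L+1) 0 (Fin.cons x t) = lsum ℓ L t := by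
  unfold ltail lsum
  rw [Finset.sum_filter, Fin.sum_univ_succ]
  simp [Fin.cons_succ]

lemma ltail_cons_succ (ℓ : S → A → ℝ) {L : ℕ} (d : ℕ) (x : S × A) (t : Fin L → S × A) :
    ltail ℓ (L+1) (d+1) (Fin.cons x t) = ltail ℓ L d t := by
  unfold ltail
  rw [Finset.sum_filter, Finset.sum_filter, Fin.sum_univ_succ]
  simp [Fin.cons_succ, Nat.succ_lt_succ_iff]

noncomputable def reachP (P : S → A → S → ℝ) (π : S → A → ℝ) (s : S) : ℕ → S → ℝ
  | 0, s' => if s' = s then 1 else 0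
  | (d+1), s' => ∑ b : A, π s' b * ∑ s'' : S, P s' b s'' * reachP P π s d s''

lemma master {H : ℕ} {layer : S → ℕ} (hP : IsLayeredKernel P layer H)
    (hπ : IsPolicy π) (ℓ : S → A → ℝ) (s : S) (a : A) (c₁ c₂ : ℝ) :
    ∀ (d L : ℕ) (s' : S) (hd : d < L), layer s' + L = H → layer s' + d = layer s →
    ∑ σ : Fin L → S × A, trajProb P π s' L σ *
      ((if σ ⟨d, hd⟩ = (s, a) then (1:ℝ) else 0) * (c₁ + c₂ * ltail ℓ L d σ))
    = reachP P π s d s' * π s a *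
        (c₁ + c₂ * ∑ s'' : S, P s a s'' * valueFrom P π s'' (H - (layer s + 1)) ℓ) := by
  intro d
  induction d with
  | zero =>
    intro L s' hd h1 h2
    obtain ⟨L', rfl⟩ : ∃ L'', L = L'' + 1 := ⟨L - 1, by omega⟩
    rw [sum_cons_aux]
    have key : ∀ x : S × A,
        ∑ t : Fin L' → S × A, trajProb P π s' (L'+1) (Fin.cons x t) *
          ((if (Fin.cons x t : Fin (L'+1) → S × A) ⟨0, hd⟩ = (s, a) then (1:ℝ) else 0) *
            (c₁ + c₂ * ltail ℓ (L'+1) 0 (Fin.cons x t)))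
        = if x = (s, a) then (if x.1 = s' then (1:ℝ) else 0) * π x.1 x.2 *
            (c₁ + c₂ * ∑ s'' : S, P s a s'' * valueFrom P π s'' (H - (layer s + 1)) ℓ) else 0 := by
      intro x
      by_cases hxa : x = (s, a)
      · rw [if_pos hxa]
        by_cases hx : x.1 = s'
        · rcases Nat.eq_zero_or_pos L' with h0 | h0
          · subst h0
            have hV : H - (layer s + 1) = 0 := by omega
            rw [hV]
            have e0 : ∀ t : Fin 0 → S × A,
                trajProb P π s' (0+1) (Fin.cons x t) *
                  ((if (Fin.cons x t : Fin (0+1) → S × A) ⟨0, hd⟩ = (s, a) then (1:ℝ) else 0) *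
                    (c₁ + c₂ * ltail ℓ (0+1) 0 (Fin.cons x t)))
                = (if x.1 = s' then (1:ℝ) else 0) * π x.1 x.2 *
                    (c₁ + c₂ * ∑ s'' : S, P s a s'' * valueFrom P π s'' 0 ℓ) := by
              intro t
              rw [trajProb_succ, dif_neg (by omega), cons_mk_zero, if_pos hxa,
                ltail_cons_zero, lsum_zero]
              simp [valueFrom_zero]
            rw [Finset.sum_congr rfl (fun t _ => e0 t)]
            simp
          · have hV : H - (layer s + 1) = L' := by omega
            rw [hV]
            have e1 : ∀ t : Fin L' → S × A,
                trajProb P π s' (L'+1) (Fin.cons x t) *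
                  ((if (Fin.cons x t : Fin (L'+1) → S × A) ⟨0, hd⟩ = (s, a) then (1:ℝ) else 0) *
                    (c₁ + c₂ * ltail ℓ (L'+1) 0 (Fin.cons x t)))
                = ((if x.1 = s' then (1:ℝ) else 0) * π x.1 x.2) *
                    ∑ s'' : S, (P x.1 x.2 s'' * (c₁ + c₂ * lsum ℓ L' t)) * trajProb P π s'' L' t := by
              intro t
              rw [trajProb_succ, dif_pos h0, cons_mk_zero, if_pos hxa, ltail_cons_zero,
                sum_sel P π h0 t (fun s'' => P x.1 x.2 s'' * (c₁ + c₂ * lsum ℓ L' t))]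
              ring
            rw [Finset.sum_congr rfl (fun t _ => e1 t), ← Finset.mul_sum, Finset.sum_comm]
            have e2 : ∀ s'' : S,
                ∑ t : Fin L' → S × A, (P x.1 x.2 s'' * (c₁ + c₂ * lsum ℓ L' t)) * trajProb P π s'' L' t
                = P x.1 x.2 s'' * (c₁ + c₂ * valueFrom P π s'' L' ℓ) := by
              intro s''
              by_cases hz : P x.1 x.2 s'' = 0
              · simp [hz]
              · have hlay := hP.2.2 x.1 x.2 s'' hz
                have hW := sum_trajProb_eq_one P π hP hπ L' s'' (by rw [hlay, hx]; omega)
                have ee : ∀ t : Fin L' → S × A,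
                    (P x.1 x.2 s'' * (c₁ + c₂ * lsum ℓ L' t)) * trajProb P π s'' L' t
                    = P x.1 x.2 s'' * c₁ * trajProb P π s'' L' t +
                      P x.1 x.2 s'' * c₂ * (trajProb P π s'' L' t * lsum ℓ L' t) := by
                  intro t; ring
                rw [Finset.sum_congr rfl (fun t _ => ee t), Finset.sum_add_distrib,
                  ← Finset.mul_sum, ← Finset.mul_sum, hW, valueFrom_eq]
                ring
            rw [Finset.sum_congr rfl (fun s'' _ => e2 s'')]
            have e3 : ∑ s'' : S, P x.1 x.2 s'' * (c₁ + c₂ * valueFrom P π s'' L' ℓ)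
                = c₁ + c₂ * ∑ s'' : S, P x.1 x.2 s'' * valueFrom P π s'' L' ℓ := by
              have hsum := hP.2.1 x.1 x.2 (by rw [hx]; omega)
              calc ∑ s'' : S, P x.1 x.2 s'' * (c₁ + c₂ * valueFrom P π s'' L' ℓ)
                  = (∑ s'' : S, P x.1 x.2 s'') * c₁ +
                      c₂ * ∑ s'' : S, P x.1 x.2 s'' * valueFrom P π s'' L' ℓ := by
                    rw [Finset.sum_mul, Finset.mul_sum, ← Finset.sum_add_distrib]
                    exact Finset.sum_congr rfl (fun _ _ => by ring)
                _ = _ := by rw [hsum]; ring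
            rw [e3]
            simp only [hxa]
        · have e5 : ∀ t : Fin L' → S × A,
              trajProb P π s' (L'+1) (Fin.cons x t) *
                ((if (Fin.cons x t : Fin (L'+1) → S × A) ⟨0, hd⟩ = (s, a) then (1:ℝ) else 0) *
                  (c₁ + c₂ * ltail ℓ (L'+1) 0 (Fin.cons x t))) = 0 := by
            intro t; rw [trajProb_succ, if_neg hx]; ring
          rw [Finset.sum_congr rfl (fun t _ => e5 t)]
          simp [hx]
      · rw [if_neg hxa]
        have e6 : ∀ t : Fin L' → S × A,
            trajProb P π s' (L'+1) (Fin.cons x t) *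
              ((if (Fin.cons x t : Fin (L'+1) → S × A) ⟨0, hd⟩ = (s, a) then (1:ℝ) else 0) *
                (c₁ + c₂ * ltail ℓ (L'+1) 0 (Fin.cons x t))) = 0 := by
          intro t; rw [cons_mk_zero, if_neg hxa]; ring
        rw [Finset.sum_congr rfl (fun t _ => e6 t)]
        simp
    rw [Finset.sum_congr rfl (fun x _ => key x), Finset.sum_ite_eq' Finset.univ ((s,a) : S × A)]
    simp only [Finset.mem_univ, if_true]
    show (if s = s' then (1:ℝ) else 0) * π s a * _ = _
    show _ = reachP P π s 0 s' * π s a * _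
    unfold reachP
    by_cases hss : s' = s
    · subst hss; simp
    · rw [if_neg (fun h => hss h.symm), if_neg hss]
  | succ d ih =>
    intro L s' hd h1 h2
    obtain ⟨L', rfl⟩ : ∃ L'', L = L'' + 1 := ⟨L - 1, by omega⟩
    have hd' : d < L' := by omega
    have h0 : 0 < L' := by omega
    rw [sum_cons_aux]
    have key : ∀ x : S × A,
        ∑ t : Fin L' → S × A, trajProb P π s' (L'+1) (Fin.cons x t) *
          ((if (Fin.cons x t : Fin (L'+1) → S × A) ⟨d+1, hd⟩ = (s, a) then (1:ℝ) else 0) *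
            (c₁ + c₂ * ltail ℓ (L'+1) (d+1) (Fin.cons x t)))
        = (if x.1 = s' then (1:ℝ) else 0) * π x.1 x.2 *
            ((∑ s'' : S, P x.1 x.2 s'' * reachP P π s d s'') * π s a *
              (c₁ + c₂ * ∑ s'' : S, P s a s'' * valueFrom P π s'' (H - (layer s + 1)) ℓ)) := by
      intro x
      by_cases hx : x.1 = s'
      · have e1 : ∀ t : Fin L' → S × A,
            trajProb P π s' (L'+1) (Fin.cons x t) *
              ((if (Fin.cons x t : Fin (L'+1) → S × A) ⟨d+1, hd⟩ = (s, a) then (1:ℝ) else 0) *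
                (c₁ + c₂ * ltail ℓ (L'+1) (d+1) (Fin.cons x t)))
            = ((if x.1 = s' then (1:ℝ) else 0) * π x.1 x.2) *
                ∑ s'' : S, P x.1 x.2 s'' * (trajProb P π s'' L' t *
                  ((if t ⟨d, hd'⟩ = (s, a) then (1:ℝ) else 0) * (c₁ + c₂ * ltail ℓ L' d t))) := by
          intro t
          rw [trajProb_succ, dif_pos h0, cons_mk_succ, ltail_cons_succ]
          have e' : ∑ s'' : S, P x.1 x.2 s'' * (trajProb P π s'' L' t *
                ((if t ⟨d, hd'⟩ = (s, a) then (1:ℝ) else 0) * (c₁ + c₂ * ltail ℓ L' d t)))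
              = (P x.1 x.2 (t ⟨0, h0⟩).1 *
                  ((if t ⟨d, hd'⟩ = (s, a) then (1:ℝ) else 0) * (c₁ + c₂ * ltail ℓ L' d t))) *
                trajProb P π (t ⟨0, h0⟩).1 L' t := by
            rw [← sum_sel P π h0 t (fun s'' => P x.1 x.2 s'' *
              ((if t ⟨d, hd'⟩ = (s, a) then (1:ℝ) else 0) * (c₁ + c₂ * ltail ℓ L' d t)))]
            exact Finset.sum_congr rfl (fun _ _ => by ring)
          rw [e']
          ring
        rw [Finset.sum_congr rfl (fun t _ => e1 t), ← Finset.mul_sum, Finset.sum_comm]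
        have e2 : ∀ s'' : S,
            ∑ t : Fin L' → S × A, P x.1 x.2 s'' * (trajProb P π s'' L' t *
              ((if t ⟨d, hd'⟩ = (s, a) then (1:ℝ) else 0) * (c₁ + c₂ * ltail ℓ L' d t)))
            = P x.1 x.2 s'' * (reachP P π s d s'' * π s a *
                (c₁ + c₂ * ∑ s'' : S, P s a s'' * valueFrom P π s'' (H - (layer s + 1)) ℓ)) := by
          intro s''
          by_cases hz : P x.1 x.2 s'' = 0
          · simp [hz]
          · have hlay := hP.2.2 x.1 x.2 s'' hz
            rw [hx] at hlay
            rw [← Finset.mul_sum, ih L' s'' hd' (by omega) (by omega)]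
        rw [Finset.sum_congr rfl (fun s'' _ => e2 s'')]
        have e7 : ∀ s'' : S, P x.1 x.2 s'' * (reachP P π s d s'' * π s a *
              (c₁ + c₂ * ∑ s'' : S, P s a s'' * valueFrom P π s'' (H - (layer s + 1)) ℓ))
            = (P x.1 x.2 s'' * reachP P π s d s'') * (π s a *
              (c₁ + c₂ * ∑ s'' : S, P s a s'' * valueFrom P π s'' (H - (layer s + 1)) ℓ)) := by
          intro s''; ring
        rw [Finset.sum_congr rfl (fun s'' _ => e7 s''), ← Finset.sum_mul]
        ring
      · have e5 : ∀ t : Fin L' → S × A,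
            trajProb P π s' (L'+1) (Fin.cons x t) *
              ((if (Fin.cons x t : Fin (L'+1) → S × A) ⟨d+1, hd⟩ = (s, a) then (1:ℝ) else 0) *
                (c₁ + c₂ * ltail ℓ (L'+1) (d+1) (Fin.cons x t))) = 0 := by
          intro t; rw [trajProb_succ, if_neg hx]; ring
        rw [Finset.sum_congr rfl (fun t _ => e5 t)]
        simp [hx]
    rw [Finset.sum_congr rfl (fun x _ => key x), Fintype.sum_prod_type]
    have e4 : ∀ u : S, ∑ b : A, (if u = s' then (1:ℝ) else 0) * π u b *
          ((∑ s'' : S, P u b s'' * reachP P π s d s'') * π s a *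
            (c₁ + c₂ * ∑ s'' : S, P s a s'' * valueFrom P π s'' (H - (layer s + 1)) ℓ))
        = if u = s' then (∑ b : A, π s' b * ∑ s'' : S, P s' b s'' * reachP P π s d s'') * π s a *
            (c₁ + c₂ * ∑ s'' : S, P s a s'' * valueFrom P π s'' (H - (layer s + 1)) ℓ) else 0 := by
      intro u
      by_cases hu : u = s'
      · subst hu
        rw [if_pos rfl, if_pos rfl, Finset.sum_mul, Finset.sum_mul]
        exact Finset.sum_congr rfl (fun b _ => by ring)
      · simp [hu]
    rw [Finset.sum_congr rfl (fun u _ => e4 u), Finset.sum_ite_eq']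
    simp only [Finset.mem_univ, if_true]
    rfl

lemma traj_layer {H : ℕ} {layer : S → ℕ} (hP : IsLayeredKernel P layer H)
    (s0 : S) (hs0 : layer s0 = 0) (τ : Fin H → S × A)
    (hne : trajProb P π s0 H τ ≠ 0) :
    ∀ (n : ℕ) (hn : n < H), layer (τ ⟨n, hn⟩).1 = n := by
  unfold trajProb at hne
  have hmul := mul_ne_zero_iff.1 hne
  have hstart := hmul.1
  have hprod := hmul.2
  rw [Finset.prod_ne_zero_iff] at hprod
  intro n
  induction n with
  | zero =>
    intro hn
    have h0 : (τ ⟨0, hn⟩).1 = s0 := by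
      by_contra hne0
      rw [dif_pos hn, if_neg hne0] at hstart
      exact hstart rfl
    rw [h0, hs0]
  | succ n ihn =>
    intro hn
    have hn' : n < H := by omega
    have hk := (mul_ne_zero_iff.1 (hprod ⟨n, hn'⟩ (Finset.mem_univ _))).2
    rw [dif_pos (show ((⟨n, hn'⟩ : Fin H) : ℕ) + 1 < H from hn)] at hk
    have := hP.2.2 _ _ _ hk
    rw [this, ihn hn']

lemma indicator_convert {H : ℕ} {layer : S → ℕ} (hP : IsLayeredKernel P layer H)
    (s0 : S) (hs0 : layer s0 = 0) (hlayer : ∀ s, layer s < H) (τ : Fin H → S × A)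
    (s : S) (a : A) (hne : trajProb P π s0 H τ ≠ 0) :
    (if ∃ h, τ h = (s, a) then (1:ℝ) else 0)
      = (if τ ⟨layer s, hlayer s⟩ = (s, a) then (1:ℝ) else 0) := by
  have hl := traj_layer P π hP s0 hs0 τ hne
  by_cases hex : ∃ h, τ h = (s, a)
  · obtain ⟨h, hh⟩ := hex
    have h1 : (τ h).1 = s := by rw [hh]
    have h2 : layer s = (h : ℕ) := by
      rw [← h1]
      have := hl (h : ℕ) h.2
      simpa [Fin.eta] using this
    have h3 : (⟨layer s, hlayer s⟩ : Fin H) = h := Fin.ext (by simpa using h2)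
    rw [if_pos ⟨h, hh⟩, h3, if_pos hh]
  · rw [if_neg hex, if_neg (fun hc => hex ⟨_, hc⟩)]

lemma mixPol_pos [Nonempty A] (πtil : S → A → ℝ) (γ : ℝ) (hγ0 : 0 < γ) (hγ1 : γ ≤ 1)
    (hπ0 : ∀ s a, 0 ≤ πtil s a) (u : S) (b : A) : 0 < mixPol πtil γ u b := by
  have hA : (0:ℝ) < (Fintype.card A : ℝ) := by
    exact_mod_cast Fintype.card_pos
  have h1 : 0 ≤ (1 - γ) * πtil u b := mul_nonneg (by linarith) (hπ0 u b)
  have h2 : 0 < γ / (Fintype.card A : ℝ) := div_pos hγ0 hA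
  unfold mixPol
  linarith

lemma xi_average [Nonempty A] (πtil : S → A → ℝ) (γ : ℝ) (hγ0 : 0 < γ) (hγ1 : γ ≤ 1)
    (hπ0 : ∀ s a, 0 ≤ πtil s a) {H : ℕ} (s0 : S) (τ : Fin H → S × A)
    (hinj : ∀ k₁ k₂ : Fin H, (τ k₁).1 = (τ k₂).1 → k₁ = k₂) (j : Fin H) :
    ∑ ξ₀ : S → Bool, (∏ s', (if ξ₀ s' then γ else 1 - γ)) *
        trajProb P (fun s a => if ξ₀ s then ((Fintype.card A : ℝ))⁻¹ else πtil s a) s0 H τ *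
        ((if ξ₀ (τ j).1 then (1:ℝ) else 0) / γ)
    = trajProb P (mixPol πtil γ) s0 H τ *
        (((Fintype.card A : ℝ))⁻¹ / mixPol πtil γ (τ j).1 (τ j).2) := by
  classical
  have hA : (0:ℝ) < (Fintype.card A : ℝ) := by exact_mod_cast Fintype.card_pos
  have hmix : ∀ u b, 0 < mixPol πtil γ u b := mixPol_pos πtil γ hγ0 hγ1 hπ0
  set C : ℝ := (if hL : 0 < H then (if (τ ⟨0, hL⟩).1 = s0 then (1:ℝ) else 0) else 1) *
      ∏ h : Fin H, (if hh : (h:ℕ)+1 < H then P (τ h).1 (τ h).2 (τ ⟨(h:ℕ)+1, hh⟩).1 else 1)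
    with hC
  have hsplit : ∀ π' : S → A → ℝ, trajProb P π' s0 H τ = C * ∏ k, π' (τ k).1 (τ k).2 := by
    intro π'
    unfold trajProb
    rw [Finset.prod_mul_distrib, hC]
    ring
  set fib : S → Finset (Fin H) := fun s' => Finset.univ.filter (fun k : Fin H => (τ k).1 = s')
    with hfib
  set g : S → Bool → ℝ := fun s' b =>
    (if b then γ else 1 - γ) *
    (∏ k ∈ fib s', (if b then ((Fintype.card A : ℝ))⁻¹ else πtil s' (τ k).2)) *
    (if s' = (τ j).1 then (if b then (1:ℝ) else 0) / γ else 1) with hg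
  have hPER : ∀ ξ₀ : S → Bool,
      (∏ s', (if ξ₀ s' then γ else 1 - γ)) *
        trajProb P (fun s a => if ξ₀ s then ((Fintype.card A : ℝ))⁻¹ else πtil s a) s0 H τ *
        ((if ξ₀ (τ j).1 then (1:ℝ) else 0) / γ)
      = C * ∏ s', g s' (ξ₀ s') := by
    intro ξ₀
    rw [hsplit]
    have h2 : ∏ s', g s' (ξ₀ s')
        = (∏ s', (if ξ₀ s' then γ else 1 - γ)) *
          (∏ s', ∏ k ∈ fib s', (if ξ₀ s' then ((Fintype.card A : ℝ))⁻¹ else πtil s' (τ k).2)) *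
          (∏ s', (if s' = (τ j).1 then (if ξ₀ s' then (1:ℝ) else 0) / γ else 1)) := by
      rw [← Finset.prod_mul_distrib, ← Finset.prod_mul_distrib]
    have h3 : (∏ s', ∏ k ∈ fib s', (if ξ₀ s' then ((Fintype.card A : ℝ))⁻¹ else πtil s' (τ k).2))
        = ∏ k : Fin H, (if ξ₀ (τ k).1 then ((Fintype.card A : ℝ))⁻¹ else πtil (τ k).1 (τ k).2) := by
      rw [← Finset.prod_fiberwise Finset.univ (fun k : Fin H => (τ k).1)
        (fun k => (if ξ₀ (τ k).1 then ((Fintype.card A : ℝ))⁻¹ else πtil (τ k).1 (τ k).2))]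
      apply Finset.prod_congr rfl
      intro s' _
      apply Finset.prod_congr rfl
      intro k hk
      have : (τ k).1 = s' := (Finset.mem_filter.1 hk).2
      rw [this]
    have h4 : (∏ s', (if s' = (τ j).1 then (if ξ₀ s' then (1:ℝ) else 0) / γ else 1))
        = (if ξ₀ (τ j).1 then (1:ℝ) else 0) / γ := by
      rw [Finset.prod_ite_eq' Finset.univ ((τ j).1) (fun s' => (if ξ₀ s' then (1:ℝ) else 0) / γ)]
      simp
    rw [h2, h3, h4]
    ring
  rw [Finset.sum_congr rfl (fun ξ₀ _ => hPER ξ₀), ← Finset.mul_sum]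
  have hswap : ∑ ξ₀ : S → Bool, ∏ s', g s' (ξ₀ s') = ∏ s', (g s' true + g s' false) := by
    rw [← Fintype.prod_sum (fun s' b => g s' b)]
    apply Finset.prod_congr rfl
    intro s' _
    exact Fintype.sum_bool (fun b => g s' b)
  rw [hswap, hsplit]
  have hR2 : ∏ k : Fin H, mixPol πtil γ (τ k).1 (τ k).2
      = ∏ s', ∏ k ∈ fib s', mixPol πtil γ s' (τ k).2 := by
    rw [← Finset.prod_fiberwise Finset.univ (fun k : Fin H => (τ k).1)
      (fun k => mixPol πtil γ (τ k).1 (τ k).2)]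
    apply Finset.prod_congr rfl
    intro s' _
    apply Finset.prod_congr rfl
    intro k hk
    have : (τ k).1 = s' := (Finset.mem_filter.1 hk).2
    rw [this]
  have hR3 : ((Fintype.card A : ℝ))⁻¹ / mixPol πtil γ (τ j).1 (τ j).2
      = ∏ s', (if s' = (τ j).1 then ((Fintype.card A : ℝ))⁻¹ / mixPol πtil γ s' (τ j).2 else 1) := by
    rw [Finset.prod_ite_eq' Finset.univ ((τ j).1)
      (fun s' => ((Fintype.card A : ℝ))⁻¹ / mixPol πtil γ s' (τ j).2)]
    simp
  rw [hR2, hR3]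
  conv_rhs => rw [mul_assoc, ← Finset.prod_mul_distrib]
  congr 1
  apply Finset.prod_congr rfl
  intro s' _
  have hcard : (fib s').card ≤ 1 := by
    rw [Finset.card_le_one]
    intro k₁ h₁ k₂ h₂
    exact hinj k₁ k₂ (by rw [(Finset.mem_filter.1 h₁).2, (Finset.mem_filter.1 h₂).2])
  interval_cases h : (fib s').card
  · -- empty fiber
    have hemp : fib s' = ∅ := Finset.card_eq_zero.1 h
    have hsj : s' ≠ (τ j).1 := by
      intro heq
      have : j ∈ fib s' := Finset.mem_filter.2 ⟨Finset.mem_univ j, heq.symm⟩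
      rw [hemp] at this
      exact absurd this (Finset.notMem_empty j)
    rw [hg]
    simp only [hemp, Finset.prod_empty, if_neg hsj]
    norm_num
  · obtain ⟨k, hk⟩ := Finset.card_eq_one.1 h
    have hks : (τ k).1 = s' := by
      have : k ∈ fib s' := by rw [hk]; exact Finset.mem_singleton_self k
      exact (Finset.mem_filter.1 this).2
    by_cases hsj : s' = (τ j).1
    · have hkj : k = j := hinj k j (by rw [hks, hsj])
      subst hkj
      rw [hg]
      have hne : mixPol πtil γ s' (τ k).2 ≠ 0 := ne_of_gt (hmix s' (τ k).2)
      simp only [hk, Finset.prod_singleton, if_pos hsj, if_true, Bool.false_eq_true, if_false,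
        zero_div, mul_zero, add_zero]
      have hr : mixPol πtil γ s' (τ k).2 * (((Fintype.card A : ℝ))⁻¹ / mixPol πtil γ s' (τ k).2)
          = ((Fintype.card A : ℝ))⁻¹ := by
        rw [← mul_div_assoc, mul_div_cancel_left₀ _ hne]
      rw [hr]
      field_simp
    · rw [hg]
      simp only [hk, Finset.prod_singleton, if_neg hsj, if_true, Bool.false_eq_true, if_false,
        mul_one]
      unfold mixPol
      rw [div_eq_mul_inv]
      ring
  -- no further cases since card ≤ 1

lemma trajProb_split {L : ℕ} (s0 : S) (τ : Fin L → S × A) (π' : S → A → ℝ) :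
    trajProb P π' s0 L τ =
      ((if hL : 0 < L then (if (τ ⟨0, hL⟩).1 = s0 then (1:ℝ) else 0) else 1) *
        ∏ h : Fin L, (if hh : (h:ℕ)+1 < L then P (τ h).1 (τ h).2 (τ ⟨(h:ℕ)+1, hh⟩).1 else 1)) *
      ∏ k, π' (τ k).1 (τ k).2 := by
  unfold trajProb
  rw [Finset.prod_mul_distrib]
  ring

lemma trajProb_zero_of_zero {L : ℕ} (s0 : S) (τ : Fin L → S × A) (π₁ π₂ : S → A → ℝ)
    (hpos : ∀ u b, 0 < π₁ u b) (h : trajProb P π₁ s0 L τ = 0) :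
    trajProb P π₂ s0 L τ = 0 := by
  rw [trajProb_split] at h ⊢
  rcases mul_eq_zero.1 h with hC | hprod
  · rw [hC, zero_mul]
  · exact absurd hprod (ne_of_gt (Finset.prod_pos (fun k _ => hpos (τ k).1 (τ k).2)))

lemma stepC [Nonempty A] (πtil : S → A → ℝ) (γ : ℝ) (hγ0 : 0 < γ) (hγ1 : γ ≤ 1)
    (hπt : ∀ u b, 0 ≤ πtil u b) {H : ℕ} {layer : S → ℕ} (hP : IsLayeredKernel P layer H)
    (s0 : S) (hs0 : layer s0 = 0) (τ : Fin H → S × A) (s : S) (a : A) (ℓ : S → A → ℝ)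
    (αc βc : ℝ) (hα0 : (¬ ∃ h, τ h = (s, a)) → αc = 0) (filt : Finset (Fin H)) :
    ∑ ξ₀ : S → Bool, ((∏ s', (if ξ₀ s' then γ else 1 - γ)) *
        trajProb P (fun u b => if ξ₀ u then ((Fintype.card A : ℝ))⁻¹ else πtil u b) s0 H τ) *
        (αc * (((if ξ₀ s then (1:ℝ) else 0)/γ) * ℓ s a) +
          βc * ∑ k ∈ filt, (mixPol πtil γ (τ k).1 (τ k).2 / ((Fintype.card A : ℝ))⁻¹) *
            (((if ξ₀ (τ k).1 then (1:ℝ) else 0)/γ) * ℓ (τ k).1 (τ k).2))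
    = trajProb P (mixPol πtil γ) s0 H τ *
        (αc * ((((Fintype.card A : ℝ))⁻¹ / mixPol πtil γ s a) * ℓ s a) +
          βc * ∑ k ∈ filt, ℓ (τ k).1 (τ k).2) := by
  classical
  have hA : (0:ℝ) < (Fintype.card A : ℝ) := by exact_mod_cast Fintype.card_pos
  have hmix : ∀ u b, 0 < mixPol πtil γ u b := mixPol_pos πtil γ hγ0 hγ1 hπt
  by_cases hne : trajProb P (mixPol πtil γ) s0 H τ = 0
  · have hz : ∀ ξ₀ : S → Bool,
        trajProb P (fun u b => if ξ₀ u then ((Fintype.card A : ℝ))⁻¹ else πtil u b) s0 H τ = 0 :=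
      fun ξ₀ => trajProb_zero_of_zero P s0 τ (mixPol πtil γ) _ hmix hne
    rw [hne, zero_mul]
    apply Finset.sum_eq_zero
    intro ξ₀ _
    rw [hz ξ₀]
    ring
  · have hinj : ∀ k₁ k₂ : Fin H, (τ k₁).1 = (τ k₂).1 → k₁ = k₂ := by
      intro k₁ k₂ hkk
      have h1 := traj_layer P (mixPol πtil γ) hP s0 hs0 τ hne (k₁ : ℕ) k₁.2
      have h2 := traj_layer P (mixPol πtil γ) hP s0 hs0 τ hne (k₂ : ℕ) k₂.2
      simp only [Fin.eta] at h1 h2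
      apply Fin.ext
      rw [← h1, ← h2, hkk]
    -- split the sum
    have hsplit2 : ∑ ξ₀ : S → Bool, ((∏ s', (if ξ₀ s' then γ else 1 - γ)) *
          trajProb P (fun u b => if ξ₀ u then ((Fintype.card A : ℝ))⁻¹ else πtil u b) s0 H τ) *
          (αc * (((if ξ₀ s then (1:ℝ) else 0)/γ) * ℓ s a) +
            βc * ∑ k ∈ filt, (mixPol πtil γ (τ k).1 (τ k).2 / ((Fintype.card A : ℝ))⁻¹) *
              (((if ξ₀ (τ k).1 then (1:ℝ) else 0)/γ) * ℓ (τ k).1 (τ k).2))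
        = (αc * ℓ s a) * (∑ ξ₀ : S → Bool, ((∏ s', (if ξ₀ s' then γ else 1 - γ)) *
              trajProb P (fun u b => if ξ₀ u then ((Fintype.card A : ℝ))⁻¹ else πtil u b) s0 H τ) *
              ((if ξ₀ s then (1:ℝ) else 0)/γ))
          + βc * ∑ k ∈ filt,
              (mixPol πtil γ (τ k).1 (τ k).2 / ((Fintype.card A : ℝ))⁻¹ * ℓ (τ k).1 (τ k).2) *
              (∑ ξ₀ : S → Bool, ((∏ s', (if ξ₀ s' then γ else 1 - γ)) *
                trajProb P (fun u b => if ξ₀ u then ((Fintype.card A : ℝ))⁻¹ else πtil u b) s0 H τ) *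
                ((if ξ₀ (τ k).1 then (1:ℝ) else 0)/γ)) := by
      have e1 : ∀ ξ₀ : S → Bool, ((∏ s', (if ξ₀ s' then γ else 1 - γ)) *
            trajProb P (fun u b => if ξ₀ u then ((Fintype.card A : ℝ))⁻¹ else πtil u b) s0 H τ) *
            (αc * (((if ξ₀ s then (1:ℝ) else 0)/γ) * ℓ s a) +
              βc * ∑ k ∈ filt, (mixPol πtil γ (τ k).1 (τ k).2 / ((Fintype.card A : ℝ))⁻¹) *
                (((if ξ₀ (τ k).1 then (1:ℝ) else 0)/γ) * ℓ (τ k).1 (τ k).2))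
          = (αc * ℓ s a) * (((∏ s', (if ξ₀ s' then γ else 1 - γ)) *
              trajProb P (fun u b => if ξ₀ u then ((Fintype.card A : ℝ))⁻¹ else πtil u b) s0 H τ) *
              ((if ξ₀ s then (1:ℝ) else 0)/γ))
            + ∑ k ∈ filt, (βc * (mixPol πtil γ (τ k).1 (τ k).2 / ((Fintype.card A : ℝ))⁻¹ *
                ℓ (τ k).1 (τ k).2)) *
              (((∏ s', (if ξ₀ s' then γ else 1 - γ)) *
                trajProb P (fun u b => if ξ₀ u then ((Fintype.card A : ℝ))⁻¹ else πtil u b) s0 H τ) *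
                ((if ξ₀ (τ k).1 then (1:ℝ) else 0)/γ)) := by
        intro ξ₀
        simp only [Finset.mul_sum, mul_add]
        congr 1
        · ring
        · apply Finset.sum_congr rfl
          intro k _
          ring
      rw [Finset.sum_congr rfl (fun ξ₀ _ => e1 ξ₀), Finset.sum_add_distrib, ← Finset.mul_sum,
        Finset.sum_comm]
      congr 1
      rw [Finset.mul_sum]
      apply Finset.sum_congr rfl
      intro k _
      rw [← Finset.mul_sum]
      ring
    rw [hsplit2]
    have hterm2 : ∀ k ∈ filt,
        (mixPol πtil γ (τ k).1 (τ k).2 / ((Fintype.card A : ℝ))⁻¹ * ℓ (τ k).1 (τ k).2) *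
          (∑ ξ₀ : S → Bool, ((∏ s', (if ξ₀ s' then γ else 1 - γ)) *
            trajProb P (fun u b => if ξ₀ u then ((Fintype.card A : ℝ))⁻¹ else πtil u b) s0 H τ) *
            ((if ξ₀ (τ k).1 then (1:ℝ) else 0)/γ))
        = trajProb P (mixPol πtil γ) s0 H τ * ℓ (τ k).1 (τ k).2 := by
      intro k _
      have hxa := xi_average P πtil γ hγ0 hγ1 hπt s0 τ hinj k
      have hform : ∑ ξ₀ : S → Bool, ((∏ s', (if ξ₀ s' then γ else 1 - γ)) *
            trajProb P (fun u b => if ξ₀ u then ((Fintype.card A : ℝ))⁻¹ else πtil u b) s0 H τ) *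
            ((if ξ₀ (τ k).1 then (1:ℝ) else 0)/γ)
          = trajProb P (mixPol πtil γ) s0 H τ *
              ((((Fintype.card A : ℝ)))⁻¹ / mixPol πtil γ (τ k).1 (τ k).2) := by
        rw [← hxa]
      rw [hform]
      have hmne : mixPol πtil γ (τ k).1 (τ k).2 ≠ 0 := ne_of_gt (hmix _ _)
      have hAne : ((Fintype.card A : ℝ))⁻¹ ≠ 0 := inv_ne_zero (ne_of_gt hA)
      field_simp
    rw [Finset.sum_congr rfl hterm2, ← Finset.mul_sum]
    by_cases hex : ∃ h, τ h = (s, a)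
    · obtain ⟨j, hj⟩ := hex
      have hjs : (τ j).1 = s := by rw [hj]
      have hja : (τ j).2 = a := by rw [hj]
      have hxa := xi_average P πtil γ hγ0 hγ1 hπt s0 τ hinj j
      rw [hjs, hja] at hxa
      rw [hxa]
      ring
    · rw [hα0 hex]
      ring
  
lemma final_sum (π : S → A → ℝ) (hπ : IsPolicy π) {H : ℕ} {layer : S → ℕ}
    (hlayer : ∀ u, layer u < H) (hP : IsLayeredKernel P layer H)
    (s0 : S) (hs0 : layer s0 = 0) (ℓ : S → A → ℝ) (s : S) (a : A) (c₁ c₂ : ℝ) :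
    ∑ τ : Fin H → S × A, trajProb P π s0 H τ *
      ((if ∃ h, τ h = (s, a) then (1:ℝ) else 0) * (c₁ + c₂ * ltail ℓ H (layer s) τ))
    = reachP P π s (layer s) s0 * π s a *
        (c₁ + c₂ * ∑ s'' : S, P s a s'' * valueFrom P π s'' (H - (layer s + 1)) ℓ) := by
  have hd : layer s < H := hlayer s
  have conv : ∀ τ : Fin H → S × A, trajProb P π s0 H τ *
        ((if ∃ h, τ h = (s, a) then (1:ℝ) else 0) * (c₁ + c₂ * ltail ℓ H (layer s) τ))
      = trajProb P π s0 H τ *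
        ((if τ ⟨layer s, hd⟩ = (s, a) then (1:ℝ) else 0) * (c₁ + c₂ * ltail ℓ H (layer s) τ)) := by
    intro τ
    by_cases hz : trajProb P π s0 H τ = 0
    · rw [hz]; ring
    · rw [indicator_convert P π hP s0 hs0 hlayer τ s a hz]
  rw [Finset.sum_congr rfl (fun τ _ => conv τ)]
  exact master P π hP hπ ℓ s a c₁ c₂ (layer s) H s0 hd (by omega) (by omega)

lemma occ_eq (π : S → A → ℝ) (hπ : IsPolicy π) {H : ℕ} {layer : S → ℕ}
    (hlayer : ∀ u, layer u < H) (hP : IsLayeredKernel P layer H)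
    (s0 : S) (hs0 : layer s0 = 0) (s : S) (a : A) :
    occ P π s0 H s a = reachP P π s (layer s) s0 * π s a := by
  have h := final_sum P π hπ hlayer hP s0 hs0 (fun _ _ => 0) s a 1 0
  simp only [zero_mul, mul_zero, add_zero, mul_one] at h
  unfold occ
  rw [← h]

lemma occS_eq [Nonempty A] (πtil : S → A → ℝ) (γ : ℝ) (hγ0 : 0 < γ) (hγ1 : γ ≤ 1)
    (hπtil : IsPolicy πtil) {H : ℕ} {layer : S → ℕ}
    (hlayer : ∀ u, layer u < H) (hP : IsLayeredKernel P layer H)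
    (s0 : S) (hs0 : layer s0 = 0) (s : S) :
    occS P (mixPol πtil γ) s0 H s = reachP P (mixPol πtil γ) s (layer s) s0 := by
  have hmixpol : IsPolicy (mixPol πtil γ) := by
    constructor
    · intro u b
      exact le_of_lt (mixPol_pos πtil γ hγ0 hγ1 hπtil.1 u b)
    · intro u
      have hA : (0:ℝ) < (Fintype.card A : ℝ) := by exact_mod_cast Fintype.card_pos
      unfold mixPol
      rw [Finset.sum_add_distrib, ← Finset.mul_sum, hπtil.2 u, Finset.sum_const,
        Finset.card_univ, nsmul_eq_mul]
      field_simp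
      ring
  unfold occS
  rw [Finset.sum_congr rfl (fun b _ =>
    occ_eq P (mixPol πtil γ) hmixpol hlayer hP s0 hs0 s b), ← Finset.mul_sum,
    hmixpol.2 s, mul_one]

lemma mixPol_policy [Nonempty A] (πtil : S → A → ℝ) (γ : ℝ) (hγ0 : 0 < γ) (hγ1 : γ ≤ 1)
    (hπtil : IsPolicy πtil) : IsPolicy (mixPol πtil γ) := by
  constructor
  · intro u b
    exact le_of_lt (mixPol_pos πtil γ hγ0 hγ1 hπtil.1 u b)
  · intro u
    have hA : (0:ℝ) < (Fintype.card A : ℝ) := by exact_mod_cast Fintype.card_pos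
    unfold mixPol
    rw [Finset.sum_add_distrib, ← Finset.mul_sum, hπtil.2 u, Finset.sum_const,
      Finset.card_univ, nsmul_eq_mul]
    field_simp
    ring

end Core

/-- **Unbiasedness of the Q-function estimator (Lemma 3).**
In the policy-optimization meta-algorithm with known transitions (per-state exploration
indicators `ξ(s) ∼ Ber(γ)` drawn independently, executed policy equal to `π̃` where `ξ(s)=0`
and uniform where `ξ(s)=1`, a full episode trajectory drawn from the executed policy and the
true kernel `P`, and a random variable `B̂(s,a)` whose conditional mean given the indicators
and trajectory is `−ℓ(s,a)` whenever `ξ(s)=1`), the Q-function estimator satisfies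
`E_t[Q̂(s,a)] = (q(s,a)/(q(s,a)+δ)) · Q^{π°}(s,a; ℓ)` where `q = q^{π°}`. -/
theorem Qhat_unbiased
    {S : Type*} [Fintype S] [DecidableEq S]
    {A : Type*} [Fintype A] [DecidableEq A] [Nonempty A]
    {Ω : Type*} [Fintype Ω]
    (H : ℕ) (layer : S → ℕ) (hlayer : ∀ s, layer s < H)
    (P : S → A → S → ℝ) (hP : IsLayeredKernel P layer H)
    (s0 : S) (hs0 : layer s0 = 0)
    (πtil : S → A → ℝ) (hπtil : IsPolicy πtil)
    (γ δ : ℝ) (hγ0 : 0 < γ) (hγ1 : γ ≤ 1) (hδ : 0 ≤ δ)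
    (ℓ : S → A → ℝ) (hℓ : ∀ s a, ℓ s a ∈ Set.Icc (0 : ℝ) 1)
    (μ : Ω → ℝ) (hμ0 : ∀ ω, 0 ≤ μ ω) (hμ1 : ∑ ω, μ ω = 1)
    (ξ : Ω → S → Bool) (traj : Ω → Fin H → S × A) (Bhat : Ω → S → A → ℝ)
    (hlaw : ∀ (ξ₀ : S → Bool) (τ : Fin H → S × A),
      ∑ ω ∈ Finset.univ.filter (fun ω => ξ ω = ξ₀ ∧ traj ω = τ), μ ω =
        (∏ s, (if ξ₀ s then γ else 1 - γ)) *
          trajProb P (fun s a => if ξ₀ s then ((Fintype.card A : ℝ))⁻¹ else πtil s a)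
            s0 H τ)
    (hBmean : ∀ (s : S) (a : A) (ξ₀ : S → Bool) (τ : Fin H → S × A), ξ₀ s = true →
      (∑ ω ∈ Finset.univ.filter (fun ω => ξ ω = ξ₀ ∧ traj ω = τ), μ ω * Bhat ω s a) =
        (∑ ω ∈ Finset.univ.filter (fun ω => ξ ω = ξ₀ ∧ traj ω = τ), μ ω) * (-ℓ s a))
    (s : S) (a : A) :
    ∑ ω, μ ω * QhatKnown P s0 H layer πtil γ δ ξ traj Bhat ω s a =
      (occ P (mixPol πtil γ) s0 H s a / (occ P (mixPol πtil γ) s0 H s a + δ)) *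
        Qfun P (mixPol πtil γ) layer H ℓ s a := by
  classical
  have hA : (0:ℝ) < (Fintype.card A : ℝ) := by exact_mod_cast Fintype.card_pos
  have hmix : ∀ u b, 0 < mixPol πtil γ u b := mixPol_pos πtil γ hγ0 hγ1 hπtil.1
  have hmixpol : IsPolicy (mixPol πtil γ) := mixPol_policy πtil γ hγ0 hγ1 hπtil
  -- Step A : decompose the expectation into fibers of (ξ, traj)
  have stepA : ∑ ω, μ ω * QhatKnown P s0 H layer πtil γ δ ξ traj Bhat ω s a
      = ∑ ξ₀ : S → Bool, ∑ τ : Fin H → S × A,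
          ∑ ω ∈ Finset.univ.filter (fun ω => ξ ω = ξ₀ ∧ traj ω = τ),
            μ ω * QhatKnown P s0 H layer πtil γ δ ξ traj Bhat ω s a := by
    rw [← Finset.sum_fiberwise Finset.univ (fun ω => (ξ ω, traj ω))
        (fun ω => μ ω * QhatKnown P s0 H layer πtil γ δ ξ traj Bhat ω s a),
      Fintype.sum_prod_type]
    apply Finset.sum_congr rfl
    intro ξ₀ _
    apply Finset.sum_congr rfl
    intro τ _
    apply Finset.sum_congr _ (fun _ _ => rfl)
    apply Finset.filter_congr
    intro ω _
    simp [Prod.ext_iff]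
  -- conditional mean of the loss estimator on a fiber
  have FIBL : ∀ (ξ₀ : S → Bool) (τ : Fin H → S × A) (x : S) (y : A),
      ∑ ω ∈ Finset.univ.filter (fun ω => ξ ω = ξ₀ ∧ traj ω = τ), μ ω * lhat γ ξ Bhat ω x y
      = (∑ ω ∈ Finset.univ.filter (fun ω => ξ ω = ξ₀ ∧ traj ω = τ), μ ω) *
          (((if ξ₀ x then (1:ℝ) else 0)/γ) * ℓ x y) := by
    intro ξ₀ τ x y
    by_cases hx : ξ₀ x
    · have e : ∀ ω ∈ Finset.univ.filter (fun ω => ξ ω = ξ₀ ∧ traj ω = τ),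
          μ ω * lhat γ ξ Bhat ω x y = -γ⁻¹ * (μ ω * Bhat ω x y) := by
        intro ω hω
        have hξω : ξ ω = ξ₀ := (Finset.mem_filter.1 hω).2.1
        unfold lhat
        rw [hξω, if_pos hx]
        ring
      rw [Finset.sum_congr rfl e, ← Finset.mul_sum, hBmean x y ξ₀ τ hx, if_pos hx]
      ring
    · have e : ∀ ω ∈ Finset.univ.filter (fun ω => ξ ω = ξ₀ ∧ traj ω = τ),
          μ ω * lhat γ ξ Bhat ω x y = 0 := by
        intro ω hω
        have hξω : ξ ω = ξ₀ := (Finset.mem_filter.1 hω).2.1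
        unfold lhat
        rw [hξω, if_neg hx]
        ring
      rw [Finset.sum_congr rfl e, Finset.sum_const_zero, if_neg hx]
      ring
  -- Step B : compute each fiber sum
  have stepB : ∀ (ξ₀ : S → Bool) (τ : Fin H → S × A),
      ∑ ω ∈ Finset.univ.filter (fun ω => ξ ω = ξ₀ ∧ traj ω = τ),
          μ ω * QhatKnown P s0 H layer πtil γ δ ξ traj Bhat ω s a
      = ((∏ s', (if ξ₀ s' then γ else 1 - γ)) *
          trajProb P (fun u b => if ξ₀ u then ((Fintype.card A : ℝ))⁻¹ else πtil u b) s0 H τ) *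
          ((occ P (mixPol πtil γ) s0 H s a / (occ P (mixPol πtil γ) s0 H s a + δ) *
              ((if ∃ h, τ h = (s, a) then (1:ℝ) else 0) /
                (occS P (mixPol πtil γ) s0 H s / (Fintype.card A : ℝ)))) *
              (((if ξ₀ s then (1:ℝ) else 0)/γ) * ℓ s a) +
            ((if ∃ h, τ h = (s, a) then (1:ℝ) else 0) / (occ P (mixPol πtil γ) s0 H s a + δ)) *
              ∑ k ∈ Finset.univ.filter (fun k : Fin H => layer s < (k : ℕ)),
                (mixPol πtil γ (τ k).1 (τ k).2 / ((Fintype.card A : ℝ))⁻¹) *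
                  (((if ξ₀ (τ k).1 then (1:ℝ) else 0)/γ) * ℓ (τ k).1 (τ k).2)) := by
    intro ξ₀ τ
    have hQ : ∀ ω ∈ Finset.univ.filter (fun ω => ξ ω = ξ₀ ∧ traj ω = τ),
        μ ω * QhatKnown P s0 H layer πtil γ δ ξ traj Bhat ω s a
        = (occ P (mixPol πtil γ) s0 H s a / (occ P (mixPol πtil γ) s0 H s a + δ) *
            ((if ∃ h, τ h = (s, a) then (1:ℝ) else 0) /
              (occS P (mixPol πtil γ) s0 H s / (Fintype.card A : ℝ)))) *
            (μ ω * lhat γ ξ Bhat ω s a) +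
          ((if ∃ h, τ h = (s, a) then (1:ℝ) else 0) / (occ P (mixPol πtil γ) s0 H s a + δ)) *
            ∑ k ∈ Finset.univ.filter (fun k : Fin H => layer s < (k : ℕ)),
              (mixPol πtil γ (τ k).1 (τ k).2 / ((Fintype.card A : ℝ))⁻¹) *
                (μ ω * lhat γ ξ Bhat ω (τ k).1 (τ k).2) := by
      intro ω hω
      have hτω : traj ω = τ := (Finset.mem_filter.1 hω).2.2
      unfold QhatKnown Lhat
      rw [hτω]
      simp only [Finset.mul_sum, mul_add]
      congr 1
      · ring
      · apply Finset.sum_congr rfl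
        intro k _
        ring
    rw [Finset.sum_congr rfl hQ, Finset.sum_add_distrib, ← Finset.mul_sum, ← Finset.mul_sum,
      Finset.sum_comm, FIBL]
    have e2 : ∀ k ∈ Finset.univ.filter (fun k : Fin H => layer s < (k : ℕ)),
        ∑ ω ∈ Finset.univ.filter (fun ω => ξ ω = ξ₀ ∧ traj ω = τ),
          (mixPol πtil γ (τ k).1 (τ k).2 / ((Fintype.card A : ℝ))⁻¹) *
            (μ ω * lhat γ ξ Bhat ω (τ k).1 (τ k).2)
        = (mixPol πtil γ (τ k).1 (τ k).2 / ((Fintype.card A : ℝ))⁻¹) *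
            ((∑ ω ∈ Finset.univ.filter (fun ω => ξ ω = ξ₀ ∧ traj ω = τ), μ ω) *
              (((if ξ₀ (τ k).1 then (1:ℝ) else 0)/γ) * ℓ (τ k).1 (τ k).2)) := by
      intro k _
      rw [← Finset.mul_sum, FIBL]
    rw [Finset.sum_congr rfl e2, ← hlaw ξ₀ τ]
    simp only [Finset.mul_sum, mul_add]
    congr 1
    · ring
    · apply Finset.sum_congr rfl
      intro k _
      ring
  rw [stepA, Finset.sum_comm]
  -- Step C : average over ξ₀ for each trajectory
  have stepCall : ∀ τ : Fin H → S × A,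
      ∑ ξ₀ : S → Bool,
        ∑ ω ∈ Finset.univ.filter (fun ω => ξ ω = ξ₀ ∧ traj ω = τ),
          μ ω * QhatKnown P s0 H layer πtil γ δ ξ traj Bhat ω s a
      = trajProb P (mixPol πtil γ) s0 H τ *
          ((occ P (mixPol πtil γ) s0 H s a / (occ P (mixPol πtil γ) s0 H s a + δ) *
              ((if ∃ h, τ h = (s, a) then (1:ℝ) else 0) /
                (occS P (mixPol πtil γ) s0 H s / (Fintype.card A : ℝ)))) *
              ((((Fintype.card A : ℝ))⁻¹ / mixPol πtil γ s a) * ℓ s a) +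
            ((if ∃ h, τ h = (s, a) then (1:ℝ) else 0) / (occ P (mixPol πtil γ) s0 H s a + δ)) *
              ∑ k ∈ Finset.univ.filter (fun k : Fin H => layer s < (k : ℕ)),
                ℓ (τ k).1 (τ k).2) := by
    intro τ
    rw [Finset.sum_congr rfl (fun ξ₀ _ => stepB ξ₀ τ)]
    apply stepC P πtil γ hγ0 hγ1 hπtil.1 hP s0 hs0 τ s a ℓ _ _ _ _
    intro hex
    rw [if_neg hex]
    rw [zero_div, mul_zero]
  rw [Finset.sum_congr rfl (fun τ _ => stepCall τ)]
  -- Step D : sum over trajectories via the master lemma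
  have conv2 : ∀ τ : Fin H → S × A,
      trajProb P (mixPol πtil γ) s0 H τ *
          ((occ P (mixPol πtil γ) s0 H s a / (occ P (mixPol πtil γ) s0 H s a + δ) *
              ((if ∃ h, τ h = (s, a) then (1:ℝ) else 0) /
                (occS P (mixPol πtil γ) s0 H s / (Fintype.card A : ℝ)))) *
              ((((Fintype.card A : ℝ))⁻¹ / mixPol πtil γ s a) * ℓ s a) +
            ((if ∃ h, τ h = (s, a) then (1:ℝ) else 0) / (occ P (mixPol πtil γ) s0 H s a + δ)) *
              ∑ k ∈ Finset.univ.filter (fun k : Fin H => layer s < (k : ℕ)),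
                ℓ (τ k).1 (τ k).2)
      = trajProb P (mixPol πtil γ) s0 H τ *
          ((if ∃ h, τ h = (s, a) then (1:ℝ) else 0) *
            ((occ P (mixPol πtil γ) s0 H s a / (occ P (mixPol πtil γ) s0 H s a + δ) *
                (occS P (mixPol πtil γ) s0 H s / (Fintype.card A : ℝ))⁻¹ *
                ((((Fintype.card A : ℝ))⁻¹ / mixPol πtil γ s a) * ℓ s a)) +
              (occ P (mixPol πtil γ) s0 H s a + δ)⁻¹ * ltail ℓ H (layer s) τ)) := by
    intro τ
    have hlt : ltail ℓ H (layer s) τ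
        = ∑ k ∈ Finset.univ.filter (fun k : Fin H => layer s < (k : ℕ)), ℓ (τ k).1 (τ k).2 := rfl
    rw [hlt]
    ring
  rw [Finset.sum_congr rfl (fun τ _ => conv2 τ),
    final_sum P (mixPol πtil γ) hmixpol hlayer hP s0 hs0 ℓ s a _ _]
  have hocc : occ P (mixPol πtil γ) s0 H s a
      = reachP P (mixPol πtil γ) s (layer s) s0 * mixPol πtil γ s a :=
    occ_eq P (mixPol πtil γ) hmixpol hlayer hP s0 hs0 s a
  have hoccS : occS P (mixPol πtil γ) s0 H s = reachP P (mixPol πtil γ) s (layer s) s0 :=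
    occS_eq P πtil γ hγ0 hγ1 hπtil hlayer hP s0 hs0 s
  rw [hocc, hoccS]
  unfold Qfun
  by_cases hρ : reachP P (mixPol πtil γ) s (layer s) s0 = 0
  · rw [hρ]
    simp
  · have hone : reachP P (mixPol πtil γ) s (layer s) s0 * mixPol πtil γ s a *
        ((reachP P (mixPol πtil γ) s (layer s) s0 / (Fintype.card A : ℝ))⁻¹ *
          ((((Fintype.card A : ℝ))⁻¹ / mixPol πtil γ s a))) = 1 := by
      have h1 : mixPol πtil γ s a ≠ 0 := ne_of_gt (hmix s a)
      have h2 : (Fintype.card A : ℝ) ≠ 0 := ne_of_gt hA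
      field_simp
    linear_combination (reachP P (mixPol πtil γ) s (layer s) s0 * mixPol πtil γ s a /
      (reachP P (mixPol πtil γ) s (layer s) s0 * mixPol πtil γ s a + δ) * ℓ s a) * hone
end

section
/- In the policy-optimization meta-algorithm, where for each state s independently the executed policy π_t(·|s) equals π̃_t(·|s) with probability 1−γ and the uniform policy with probability γ, it holds for every state s that E_t[V^{π_t}(s; ℓ_t)] = V^{π_t°}(s; ℓ_t), where π_t°(·|s) = (1−γ)π̃_t(·|s) + γ/A. -/
open Finset

lemma lemA {S : Type*} [Fintype S] [DecidableEq S] {A : Type*} [Fintype A] [DecidableEq A]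
    (πtil : S → A → ℝ) (γ : ℝ) (L : ℕ) (τ : Fin L → S × A)
    (hinj : Function.Injective fun h : Fin L => (τ h).1) :
    ∑ ξ : S → Bool, (∏ s' : S, (if ξ s' then γ else 1 - γ)) *
        ∏ h : Fin L, (if ξ (τ h).1 then ((Fintype.card A : ℝ))⁻¹ else πtil (τ h).1 (τ h).2)
      = ∏ h : Fin L, ((1 - γ) * πtil (τ h).1 (τ h).2 + γ / (Fintype.card A : ℝ)) := by
  classical
  have step1 : ∀ ξ : S → Bool,
      (∏ s' : S, (if ξ s' then γ else 1 - γ)) *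
        ∏ h : Fin L, (if ξ (τ h).1 then ((Fintype.card A : ℝ))⁻¹ else πtil (τ h).1 (τ h).2)
      = ∏ s' : S, ((if ξ s' then γ else 1 - γ) *
          ∏ h ∈ Finset.univ.filter (fun h : Fin L => (τ h).1 = s'),
            (if ξ s' then ((Fintype.card A : ℝ))⁻¹ else πtil s' (τ h).2)) := by
    intro ξ
    rw [Finset.prod_mul_distrib]
    congr 1
    rw [← Finset.prod_fiberwise_of_maps_to (g := fun h : Fin L => (τ h).1)
      (fun h _ => Finset.mem_univ _)
      (fun h => if ξ (τ h).1 then ((Fintype.card A : ℝ))⁻¹ else πtil (τ h).1 (τ h).2)]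
    refine Finset.prod_congr rfl fun s' _ => Finset.prod_congr rfl fun h hh => ?_
    obtain ⟨-, hh2⟩ := Finset.mem_filter.mp hh
    rw [hh2]
  simp only [step1]
  rw [← Fintype.prod_sum (κ := fun _ : S => Bool)
    (f := fun s' b => (if b then γ else 1 - γ) *
      ∏ h ∈ Finset.univ.filter (fun h : Fin L => (τ h).1 = s'),
        (if b then ((Fintype.card A : ℝ))⁻¹ else πtil s' (τ h).2))]
  rw [← Finset.prod_fiberwise_of_maps_to (g := fun h : Fin L => (τ h).1)
    (fun h _ => Finset.mem_univ _)
    (fun h => (1 - γ) * πtil (τ h).1 (τ h).2 + γ / (Fintype.card A : ℝ))]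
  refine Finset.prod_congr rfl fun s' _ => ?_
  rcases (Finset.univ.filter (fun h : Fin L => (τ h).1 = s')).eq_empty_or_nonempty with
    he | ⟨h0, hh0⟩
  · rw [he]
    simp [Fintype.sum_bool]
  · have hmem := Finset.mem_filter.mp hh0
    have ht : Finset.univ.filter (fun h : Fin L => (τ h).1 = s') = {h0} := by
      refine Finset.eq_singleton_iff_unique_mem.mpr ⟨hh0, fun x hx => ?_⟩
      exact hinj ((Finset.mem_filter.mp hx).2.trans hmem.2.symm)
    rw [ht]
    simp [Fintype.sum_bool, hmem.2, div_eq_mul_inv]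
    ring

lemma lemB {S : Type*} [Fintype S] [DecidableEq S] {A : Type*} [Fintype A] [DecidableEq A]
    (layer : S → ℕ) (P : S → A → S → ℝ)
    (hP3 : ∀ s a s', P s a s' ≠ 0 → layer s' = layer s + 1)
    (πtil : S → A → ℝ) (γ : ℝ) (s : S) (L : ℕ) (τ : Fin L → S × A) :
    ∑ ξ : S → Bool, (∏ s' : S, (if ξ s' then γ else 1 - γ)) *
        trajProb P (fun s' a => if ξ s' then ((Fintype.card A : ℝ))⁻¹ else πtil s' a) s L τ
      = trajProb P (fun s' a => (1 - γ) * πtil s' a + γ / (Fintype.card A : ℝ)) s L τ := by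
  classical
  have expand : ∀ π : S → A → ℝ, trajProb P π s L τ =
      ((if hL : 0 < L then (if (τ ⟨0, hL⟩).1 = s then (1 : ℝ) else 0) else 1) *
        ∏ h : Fin L, (if hh : (h : ℕ) + 1 < L then
          P (τ h).1 (τ h).2 (τ ⟨(h : ℕ) + 1, hh⟩).1 else 1)) *
        ∏ h : Fin L, π (τ h).1 (τ h).2 := by
    intro π; unfold trajProb; rw [Finset.prod_mul_distrib]; ring
  simp only [expand]
  by_cases hp : (∏ h : Fin L, (if hh : (h : ℕ) + 1 < L then
      P (τ h).1 (τ h).2 (τ ⟨(h : ℕ) + 1, hh⟩).1 else 1)) = 0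
  · simp [hp]
  · have hne : ∀ h : Fin L, (if hh : (h : ℕ) + 1 < L then
        P (τ h).1 (τ h).2 (τ ⟨(h : ℕ) + 1, hh⟩).1 else 1) ≠ 0 :=
      fun h => Finset.prod_ne_zero_iff.mp hp h (Finset.mem_univ h)
    have hinj : Function.Injective fun h : Fin L => (τ h).1 := by
      intro a b hab
      have hab' : (τ a).1 = (τ b).1 := hab
      have h0 : 0 < L := Nat.lt_of_le_of_lt (Nat.zero_le _) a.isLt
      have hstep : ∀ (i : ℕ) (hi1 : i + 1 < L),
          layer (τ ⟨i + 1, hi1⟩).1 = layer (τ ⟨i, Nat.lt_of_succ_lt hi1⟩).1 + 1 := by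
        intro i hi1
        have h := hne ⟨i, Nat.lt_of_succ_lt hi1⟩
        rw [dif_pos (show ((⟨i, Nat.lt_of_succ_lt hi1⟩ : Fin L) : ℕ) + 1 < L from hi1)] at h
        exact hP3 _ _ _ h
      have hbase : ∀ (i : ℕ) (hi : i < L),
          layer (τ ⟨i, hi⟩).1 = layer (τ ⟨0, h0⟩).1 + i := by
        intro i
        induction i with
        | zero => intro hi; rfl
        | succ n ih =>
          intro hi
          rw [hstep n hi, ih (Nat.lt_of_succ_lt hi)]
          omega
      have ha := hbase a.val a.isLt
      have hb := hbase b.val b.isLt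
      simp only [Fin.eta] at ha hb
      rw [hab'] at ha
      exact Fin.ext (by omega)
    calc ∑ ξ : S → Bool, (∏ s' : S, (if ξ s' then γ else 1 - γ)) *
          (((if hL : 0 < L then (if (τ ⟨0, hL⟩).1 = s then (1 : ℝ) else 0) else 1) *
            ∏ h : Fin L, (if hh : (h : ℕ) + 1 < L then
              P (τ h).1 (τ h).2 (τ ⟨(h : ℕ) + 1, hh⟩).1 else 1)) *
            ∏ h : Fin L, (if ξ (τ h).1 then ((Fintype.card A : ℝ))⁻¹
              else πtil (τ h).1 (τ h).2))
        = ((if hL : 0 < L then (if (τ ⟨0, hL⟩).1 = s then (1 : ℝ) else 0) else 1) *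
            ∏ h : Fin L, (if hh : (h : ℕ) + 1 < L then
              P (τ h).1 (τ h).2 (τ ⟨(h : ℕ) + 1, hh⟩).1 else 1)) *
          ∑ ξ : S → Bool, (∏ s' : S, (if ξ s' then γ else 1 - γ)) *
            ∏ h : Fin L, (if ξ (τ h).1 then ((Fintype.card A : ℝ))⁻¹
              else πtil (τ h).1 (τ h).2) := by
          rw [Finset.mul_sum]
          exact Finset.sum_congr rfl fun ξ _ => by ring
      _ = _ := by rw [lemA πtil γ L τ hinj]

/-- **Per-state ε-greedy mixing and the value function (Lemma 6).**
In the policy-optimization meta-algorithm, for each state `s` independently the executed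
policy `π_t(·|s)` equals `π̃_t(·|s)` with probability `1−γ` and the uniform policy with
probability `γ` (indicator `ξ(s) ∼ Ber(γ)`).  Then for every state `s`,
`E_t[V^{π_t}(s; ℓ_t)] = V^{π_t°}(s; ℓ_t)` where `π_t°(·|s) = (1−γ) π̃_t(·|s) + γ/A`. -/
theorem expected_value_of_mixed_policy
    {S : Type*} [Fintype S] [DecidableEq S]
    {A : Type*} [Fintype A] [DecidableEq A] [Nonempty A]
    (H : ℕ) (layer : S → ℕ) (hlayer : ∀ s, layer s < H)
    (P : S → A → S → ℝ) (hP : IsLayeredKernel P layer H)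
    (πtil : S → A → ℝ) (hπtil : IsPolicy πtil)
    (γ : ℝ) (hγ0 : 0 ≤ γ) (hγ1 : γ ≤ 1)
    (ℓ : S → A → ℝ) (hℓ : ∀ s a, ℓ s a ∈ Set.Icc (0 : ℝ) 1)
    (s : S) :
    ∑ ξ : S → Bool,
        (∏ s' : S, (if ξ s' then γ else 1 - γ)) *
          valueFrom P (fun s' a => if ξ s' then ((Fintype.card A : ℝ))⁻¹ else πtil s' a)
            s (H - layer s) ℓ =
      valueFrom P (fun s' a => (1 - γ) * πtil s' a + γ / (Fintype.card A : ℝ))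
        s (H - layer s) ℓ := by
  classical
  unfold valueFrom
  rw [Finset.sum_congr rfl fun ξ _ => by rw [Finset.mul_sum], Finset.sum_comm]
  refine Finset.sum_congr rfl fun τ _ => ?_
  rw [← lemB layer P hP.2.2 πtil γ s (H - layer s) τ, Finset.sum_mul]
  exact Finset.sum_congr rfl fun ξ _ => by ring
end

section
/- In the policy-optimization meta-algorithm where for each state s independently the executed policy π_t(·|s) equals π̃_t(·|s) with probability 1−γ and the uniform policy with probability γ, it holds for every state s that E_t[⟨π_t(·|s), Q^{π_t}(s,·; ℓ_t)⟩] = ⟨π_t°(·|s), Q^{π_t°}(s,·; ℓ_t)⟩, where π_t°(·|s) = (1−γ)π̃_t(·|s) + γ/A. -/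
open Finset

section Aux

variable {S : Type*} [Fintype S] [DecidableEq S]
variable {A : Type*} [Fintype A] [DecidableEq A]

/-- The policy-free part of `trajProb`. -/
noncomputable def trajW (P : S → A → S → ℝ) (s : S) (L : ℕ) (τ : Fin L → S × A) : ℝ :=
  (if hL : 0 < L then (if (τ ⟨0, hL⟩).1 = s then (1 : ℝ) else 0) else 1) *
    ∏ h : Fin L,
      (if hh : (h : ℕ) + 1 < L then P (τ h).1 (τ h).2 (τ ⟨(h : ℕ) + 1, hh⟩).1 else 1)

lemma trajProb_eq (P : S → A → S → ℝ) (π : S → A → ℝ) (s : S) (L : ℕ) (τ : Fin L → S × A) :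
    trajProb P π s L τ = trajW P s L τ * ∏ h : Fin L, π (τ h).1 (τ h).2 := by
  unfold trajProb trajW
  rw [Finset.prod_mul_distrib]
  ring

lemma trajW_layer (P : S → A → S → ℝ) (layer : S → ℕ) (H : ℕ)
    (hP : IsLayeredKernel P layer H) (s : S) (L : ℕ) (τ : Fin L → S × A)
    (hW : trajW P s L τ ≠ 0) : ∀ h : Fin L, layer (τ h).1 = layer s + (h : ℕ) := by
  obtain ⟨h1, h2⟩ := mul_ne_zero_iff.mp hW
  have hstart : ∀ hL : 0 < L, (τ ⟨0, hL⟩).1 = s := by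
    intro hL
    rw [dif_pos hL] at h1
    by_contra hc
    rw [if_neg hc] at h1
    exact h1 rfl
  have hfac : ∀ (h : Fin L) (hh : (h : ℕ) + 1 < L),
      P (τ h).1 (τ h).2 (τ ⟨(h : ℕ) + 1, hh⟩).1 ≠ 0 := by
    intro h hh
    have := Finset.prod_ne_zero_iff.mp h2 h (Finset.mem_univ _)
    rwa [dif_pos hh] at this
  have main : ∀ k (hk : k < L), layer (τ ⟨k, hk⟩).1 = layer s + k := by
    intro k
    induction k with
    | zero =>
      intro hk
      rw [hstart hk]
      simp
    | succ n ih =>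
      intro hk
      have hn : n < L := by omega
      have hlay := hP.2.2 _ _ _ (hfac ⟨n, hn⟩ hk)
      rw [hlay, ih hn]
      omega
  rintro ⟨k, hk⟩
  exact main k hk

lemma key_mix (πtil : S → A → ℝ) (γ u : ℝ) (n : ℕ) (τ : Fin n → S × A)
    (hinj : Function.Injective fun h : Fin n => (τ h).1) :
    ∑ ξ : S → Bool,
        (∏ s' : S, (if ξ s' then γ else 1 - γ)) *
          ∏ h : Fin n, (if ξ (τ h).1 then u else πtil (τ h).1 (τ h).2) =
      ∏ h : Fin n, ((1 - γ) * πtil (τ h).1 (τ h).2 + γ * u) := by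
  classical
  set fib : S → Finset (Fin n) := fun s' => Finset.univ.filter (fun h => (τ h).1 = s') with hfib
  have hsmall : ∀ s', (fib s').card ≤ 1 := by
    intro s'
    refine Finset.card_le_one.mpr ?_
    intro a ha b hb
    have ha' := (Finset.mem_filter.mp ha).2
    have hb' := (Finset.mem_filter.mp hb).2
    exact hinj (ha'.trans hb'.symm)
  have regroup : ∀ g : Fin n → ℝ, ∏ h, g h = ∏ s', ∏ h ∈ fib s', g h := by
    intro g
    exact (Finset.prod_fiberwise_of_maps_to (fun x _ => Finset.mem_univ ((τ x).1)) g).symm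
  set q : S → Bool → ℝ := fun s' b =>
    (if b then γ else 1 - γ) * ∏ h ∈ fib s', (if b then u else πtil s' (τ h).2) with hq
  have step1 : ∀ ξ : S → Bool,
      (∏ s' : S, (if ξ s' then γ else 1 - γ)) *
          ∏ h : Fin n, (if ξ (τ h).1 then u else πtil (τ h).1 (τ h).2)
        = ∏ s' : S, q s' (ξ s') := by
    intro ξ
    rw [regroup fun h => (if ξ (τ h).1 then u else πtil (τ h).1 (τ h).2),
      ← Finset.prod_mul_distrib]
    refine Finset.prod_congr rfl fun s' _ => ?_
    rw [hq]
    congr 1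
    refine Finset.prod_congr rfl fun h hh => ?_
    rw [(Finset.mem_filter.mp hh).2]
  rw [Finset.sum_congr rfl fun ξ _ => step1 ξ]
  have hswap : ∑ ξ : S → Bool, ∏ s', q s' (ξ s') = ∏ s', ∑ b : Bool, q s' b := by
    rw [Finset.prod_univ_sum, Fintype.piFinset_univ]
  rw [hswap]
  have step3 : ∀ s' : S,
      (∑ b : Bool, q s' b) = ∏ h ∈ fib s', ((1 - γ) * πtil s' (τ h).2 + γ * u) := by
    intro s'
    rw [Fintype.sum_bool, hq]
    simp only [reduceIte]
    rcases Nat.lt_or_ge (fib s').card 1 with hc | hc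
    · have hempty : fib s' = ∅ := Finset.card_eq_zero.mp (by omega)
      simp [hempty]
    · have h1 : (fib s').card = 1 := le_antisymm (hsmall s') hc
      obtain ⟨h0, hh0⟩ := Finset.card_eq_one.mp h1
      simp only [hh0, Finset.prod_singleton]
      norm_num
      ring
  rw [regroup fun h => (1 - γ) * πtil (τ h).1 (τ h).2 + γ * u]
  refine Finset.prod_congr rfl fun s' _ => ?_
  rw [step3 s']
  refine Finset.prod_congr rfl fun h hh => ?_
  rw [(Finset.mem_filter.mp hh).2]

lemma key_one (πtil : S → A → ℝ) (γ u : ℝ) (s : S) (a : A) :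
    ∑ ξ : S → Bool, (∏ s' : S, (if ξ s' then γ else 1 - γ)) * (if ξ s then u else πtil s a) =
      (1 - γ) * πtil s a + γ * u := by
  have := key_mix πtil γ u 1 (fun _ => (s, a)) (fun i j _ => Subsingleton.elim i j)
  simpa using this

end Aux

/-- **Per-state ε-greedy mixing and the Q-function.**
In the policy-optimization meta-algorithm, where for each state `s` independently the executed
policy `π_t(·|s)` equals `π̃_t(·|s)` with probability `1−γ` and the uniform policy with
probability `γ`, it holds for every state `s` that
`E_t[⟨π_t(·|s), Q^{π_t}(s,·; ℓ_t)⟩] = ⟨π_t°(·|s), Q^{π_t°}(s,·; ℓ_t)⟩`,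
where `π_t°(·|s) = (1−γ) π̃_t(·|s) + γ/A`. -/
theorem expected_inner_policy_Q_of_mixed_policy
    {S : Type*} [Fintype S] [DecidableEq S]
    {A : Type*} [Fintype A] [DecidableEq A] [Nonempty A]
    (H : ℕ) (layer : S → ℕ) (hlayer : ∀ s, layer s < H)
    (P : S → A → S → ℝ) (hP : IsLayeredKernel P layer H)
    (πtil : S → A → ℝ) (hπtil : IsPolicy πtil)
    (γ : ℝ) (hγ0 : 0 ≤ γ) (hγ1 : γ ≤ 1)
    (ℓ : S → A → ℝ) (hℓ : ∀ s a, ℓ s a ∈ Set.Icc (0 : ℝ) 1)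
    (s : S) :
    ∑ ξ : S → Bool,
        (∏ s' : S, (if ξ s' then γ else 1 - γ)) *
          ∑ a : A,
            (if ξ s then ((Fintype.card A : ℝ))⁻¹ else πtil s a) *
              Qfun P (fun s' a' => if ξ s' then ((Fintype.card A : ℝ))⁻¹ else πtil s' a')
                layer H ℓ s a =
      ∑ a : A,
        ((1 - γ) * πtil s a + γ / (Fintype.card A : ℝ)) *
          Qfun P (fun s' a' => (1 - γ) * πtil s' a' + γ / (Fintype.card A : ℝ))
            layer H ℓ s a := by
  classical
  set u : ℝ := ((Fintype.card A : ℝ))⁻¹ with hu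
  set πmix : S → A → ℝ := fun s' a' => (1 - γ) * πtil s' a' + γ / (Fintype.card A : ℝ)
    with hπmix
  have hmix_eq : ∀ s' a', πmix s' a' = (1 - γ) * πtil s' a' + γ * u := by
    intro s' a'
    rw [hπmix, hu, div_eq_mul_inv]
  set L : ℕ := H - (layer s + 1) with hL
  -- Per-trajectory claim.
  have F : ∀ (a : A) (s'' : S), layer s'' = layer s + 1 → ∀ τ : Fin L → S × A,
      ∑ ξ : S → Bool,
          (∏ s' : S, (if ξ s' then γ else 1 - γ)) *
            ((if ξ s then u else πtil s a) *
              trajProb P (fun s' a' => if ξ s' then u else πtil s' a') s'' L τ) =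
        πmix s a * trajProb P πmix s'' L τ := by
    intro a s'' hs'' τ
    by_cases hW : trajW P s'' L τ = 0
    · simp [trajProb_eq, hW]
    · have hlayτ := trajW_layer P layer H hP s'' L τ hW
      set τ' : Fin (L + 1) → S × A := Fin.cons (s, a) τ with hτ'
      have hlay : ∀ h : Fin (L + 1), layer (τ' h).1 = layer s + (h : ℕ) := by
        intro h
        refine Fin.cases ?_ (fun i => ?_) h
        · simp [hτ']
        · have hcs : τ' i.succ = τ i := by simp [hτ']
          rw [hcs, hlayτ i, hs'']
          simp [Fin.val_succ]
          omega
      have hinj : Function.Injective fun h : Fin (L + 1) => (τ' h).1 := by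
        intro i j hij
        have h2 : layer (τ' i).1 = layer (τ' j).1 := congrArg layer hij
        rw [hlay i, hlay j] at h2
        exact Fin.ext (by omega)
      have hk := key_mix πtil γ u (L + 1) τ' hinj
      calc ∑ ξ : S → Bool,
            (∏ s' : S, (if ξ s' then γ else 1 - γ)) *
              ((if ξ s then u else πtil s a) *
                trajProb P (fun s' a' => if ξ s' then u else πtil s' a') s'' L τ)
          = ∑ ξ : S → Bool, trajW P s'' L τ *
              ((∏ s' : S, (if ξ s' then γ else 1 - γ)) *
                ∏ h : Fin (L + 1), (if ξ (τ' h).1 then u else πtil (τ' h).1 (τ' h).2)) := by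
            refine Finset.sum_congr rfl fun ξ _ => ?_
            rw [trajProb_eq, Fin.prod_univ_succ]
            simp only [hτ', Fin.cons_zero, Fin.cons_succ]
            ring
        _ = trajW P s'' L τ *
              ∏ h : Fin (L + 1), ((1 - γ) * πtil (τ' h).1 (τ' h).2 + γ * u) := by
            rw [← Finset.mul_sum, hk]
        _ = πmix s a * trajProb P πmix s'' L τ := by
            rw [trajProb_eq, Fin.prod_univ_succ]
            simp only [hτ', Fin.cons_zero, Fin.cons_succ, hmix_eq]
            ring
  -- Value-function claim.
  have E : ∀ (a : A) (s'' : S), layer s'' = layer s + 1 →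
      ∑ ξ : S → Bool,
          (∏ s' : S, (if ξ s' then γ else 1 - γ)) *
            ((if ξ s then u else πtil s a) *
              valueFrom P (fun s' a' => if ξ s' then u else πtil s' a') s'' L ℓ) =
        πmix s a * valueFrom P πmix s'' L ℓ := by
    intro a s'' hs''
    unfold valueFrom
    calc ∑ ξ : S → Bool,
          (∏ s' : S, (if ξ s' then γ else 1 - γ)) *
            ((if ξ s then u else πtil s a) *
              ∑ τ : Fin L → S × A,
                trajProb P (fun s' a' => if ξ s' then u else πtil s' a') s'' L τ *
                  ∑ h : Fin L, ℓ (τ h).1 (τ h).2)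
        = ∑ ξ : S → Bool, ∑ τ : Fin L → S × A,
            ((∏ s' : S, (if ξ s' then γ else 1 - γ)) *
              ((if ξ s then u else πtil s a) *
                trajProb P (fun s' a' => if ξ s' then u else πtil s' a') s'' L τ)) *
              ∑ h : Fin L, ℓ (τ h).1 (τ h).2 := by
          refine Finset.sum_congr rfl fun ξ _ => ?_
          rw [Finset.mul_sum, Finset.mul_sum]
          exact Finset.sum_congr rfl fun τ _ => by ring
      _ = ∑ τ : Fin L → S × A,
            (∑ ξ : S → Bool,
              (∏ s' : S, (if ξ s' then γ else 1 - γ)) *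
                ((if ξ s then u else πtil s a) *
                  trajProb P (fun s' a' => if ξ s' then u else πtil s' a') s'' L τ)) *
              ∑ h : Fin L, ℓ (τ h).1 (τ h).2 := by
          rw [Finset.sum_comm]
          exact Finset.sum_congr rfl fun τ _ => (Finset.sum_mul _ _ _).symm
      _ = ∑ τ : Fin L → S × A,
            (πmix s a * trajProb P πmix s'' L τ) * ∑ h : Fin L, ℓ (τ h).1 (τ h).2 :=
          Finset.sum_congr rfl fun τ _ => by rw [F a s'' hs'' τ]
      _ = πmix s a * ∑ τ : Fin L → S × A,
            trajProb P πmix s'' L τ * ∑ h : Fin L, ℓ (τ h).1 (τ h).2 := by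
          rw [Finset.mul_sum]
          exact Finset.sum_congr rfl fun τ _ => by ring
  -- Per-action claim.
  have C : ∀ a : A,
      ∑ ξ : S → Bool,
          (∏ s' : S, (if ξ s' then γ else 1 - γ)) *
            ((if ξ s then u else πtil s a) *
              Qfun P (fun s' a' => if ξ s' then u else πtil s' a') layer H ℓ s a) =
        πmix s a * Qfun P πmix layer H ℓ s a := by
    intro a
    unfold Qfun
    rw [← hL]
    calc ∑ ξ : S → Bool,
          (∏ s' : S, (if ξ s' then γ else 1 - γ)) *
            ((if ξ s then u else πtil s a) *
              (ℓ s a + ∑ s'' : S, P s a s'' *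
                valueFrom P (fun s' a' => if ξ s' then u else πtil s' a') s'' L ℓ))
        = (∑ ξ : S → Bool,
            (∏ s' : S, (if ξ s' then γ else 1 - γ)) * (if ξ s then u else πtil s a)) * ℓ s a
          + ∑ s'' : S, P s a s'' *
              ∑ ξ : S → Bool,
                (∏ s' : S, (if ξ s' then γ else 1 - γ)) *
                  ((if ξ s then u else πtil s a) *
                    valueFrom P (fun s' a' => if ξ s' then u else πtil s' a') s'' L ℓ) := by
          have key2 : ∀ ξ : S → Bool,
              (∏ s' : S, (if ξ s' then γ else 1 - γ)) *
                ((if ξ s then u else πtil s a) *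
                  (ℓ s a + ∑ s'' : S, P s a s'' *
                    valueFrom P (fun s' a' => if ξ s' then u else πtil s' a') s'' L ℓ))
              = ((∏ s' : S, (if ξ s' then γ else 1 - γ)) * (if ξ s then u else πtil s a)) *
                  ℓ s a
                + ∑ s'' : S, P s a s'' *
                    ((∏ s' : S, (if ξ s' then γ else 1 - γ)) *
                      ((if ξ s then u else πtil s a) *
                        valueFrom P (fun s' a' => if ξ s' then u else πtil s' a') s'' L ℓ)) := by
            intro ξ
            rw [mul_add, mul_add, Finset.mul_sum, Finset.mul_sum]
            congr 1
            · ring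
            · exact Finset.sum_congr rfl fun s'' _ => by ring
          rw [Finset.sum_congr rfl fun ξ _ => key2 ξ, Finset.sum_add_distrib, ← Finset.sum_mul]
          congr 1
          rw [Finset.sum_comm]
          exact Finset.sum_congr rfl fun s'' _ => (Finset.mul_sum _ _ _).symm
      _ = πmix s a * ℓ s a
          + ∑ s'' : S, P s a s'' * (πmix s a * valueFrom P πmix s'' L ℓ) := by
          rw [key_one, ← hmix_eq]
          congr 1
          refine Finset.sum_congr rfl fun s'' _ => ?_
          by_cases hP0 : P s a s'' = 0
          · simp [hP0]
          · rw [E a s'' (hP.2.2 s a s'' hP0)]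
      _ = πmix s a * (ℓ s a + ∑ s'' : S, P s a s'' * valueFrom P πmix s'' L ℓ) := by
          rw [mul_add, Finset.mul_sum]
          congr 1
          exact Finset.sum_congr rfl fun s'' _ => by ring
  -- Assemble.
  calc ∑ ξ : S → Bool,
        (∏ s' : S, (if ξ s' then γ else 1 - γ)) *
          ∑ a : A, (if ξ s then u else πtil s a) *
            Qfun P (fun s' a' => if ξ s' then u else πtil s' a') layer H ℓ s a
      = ∑ a : A, ∑ ξ : S → Bool,
          (∏ s' : S, (if ξ s' then γ else 1 - γ)) *
            ((if ξ s then u else πtil s a) *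
              Qfun P (fun s' a' => if ξ s' then u else πtil s' a') layer H ℓ s a) := by
        rw [Finset.sum_comm]
        exact Finset.sum_congr rfl fun ξ _ => Finset.mul_sum _ _ _
    _ = ∑ a : A, πmix s a * Qfun P πmix layer H ℓ s a :=
        Finset.sum_congr rfl fun a _ => C a
    _ = ∑ a : A,
          ((1 - γ) * πtil s a + γ / (Fintype.card A : ℝ)) *
            Qfun P πmix layer H ℓ s a :=
        Finset.sum_congr rfl fun a _ => by rw [hπmix]
end
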